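/- arXiv:1611.06942 — 7 statements merged into one kernel-verified Lean document; each statement's English description precedes it below -/
import Mathlib

section
/- Let α ∈ (0,1) and let w ∈ ℂ with w ∉ 2πℤ. Then the symmetric partial sums of the series ∑_{n∈ℤ} e^{2πiαn}/(w − 2πn) converge, and lim_{N→∞} ∑_{n=−N}^{N} e^{2πiαn}/(w − 2πn) = i e^{iαw}/(e^{iw} − 1). -/
/-! The number `(e^{iw} - 1) / (i (w - 2πn))` is the `n`-th Fourier coefficient of `t ↦ e^{iwt}`
on `[0, 1]`, so the symmetric partial sum is `i / (e^{iw} - 1)` times the integral of `e^{iwt}`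
against the Dirichlet kernel `D_N(α - t)`, and the claim is Dirichlet's pointwise convergence
theorem at the interior point `α`. For that, `(e^{2πis} - 1) D_N(s)` telescopes to
`e^{2πi(N+1)s} - e^{-2πiNs}`, while `(f t - f α) / (e^{2πi(α-t)} - 1)` is a quotient of two
slopes at `α`, continuous on `[0, 1]` because `α - t ∈ (-1, 1)` there; hence the error term is a
difference of two Fourier coefficients of a continuous function, which tend to `0` by the
Riemann–Lebesgue lemma. -/

open Filter Complex Topology MeasureTheory
open scoped Real FourierTransform

lemma sub_one_mul_sum_zpow_Icc {K : Type*} [Field K] {z : K} (hz : z ≠ 0) (N : ℕ) :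
    (z - 1) * ∑ n ∈ Finset.Icc (-(N : ℤ)) N, z ^ n =
      z ^ ((N : ℤ) + 1) - z ^ (-(N : ℤ)) := by
  induction N with
  | zero => simp
  | succ N ih =>
    have hIcc : Finset.Icc (-((N + 1 : ℕ) : ℤ)) ((N + 1 : ℕ) : ℤ) =
        insert (-(N : ℤ) - 1) (insert ((N : ℤ) + 1) (Finset.Icc (-(N : ℤ)) N)) := by
      ext x; simp; omega
    rw [hIcc, Finset.sum_insert (by simp; omega), Finset.sum_insert (by simp), mul_add, mul_add,
      ih]
    push_cast
    simp only [zpow_add₀ hz, zpow_sub₀ hz, zpow_neg, zpow_one]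
    field_simp
    ring

noncomputable def dirichletKernel (N : ℕ) (s : ℝ) : ℂ :=
  ∑ n ∈ Finset.Icc (-(N : ℤ)) N, exp (2 * π * I * n * s)

lemma sub_one_mul_dirichletKernel (N : ℕ) (s : ℝ) :
    (exp (2 * π * I * s) - 1) * dirichletKernel N s =
      exp (2 * π * I * (N + 1 : ℝ) * s) - exp (2 * π * I * (-N : ℝ) * s) := by
  have hpow (n : ℤ) : exp (2 * π * I * n * s) = exp (2 * π * I * s) ^ n := by
    rw [← exp_int_mul]; ring_nf
  simp only [dirichletKernel, hpow]
  rw [sub_one_mul_sum_zpow_Icc (exp_ne_zero _), ← hpow, ← hpow]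
  push_cast
  ring_nf

lemma exp_two_pi_I_mul_ne_one {s : ℝ} (hs0 : s ≠ 0) (hs : |s| < 1) :
    exp (2 * π * I * s) ≠ 1 := by
  rw [Ne, Complex.exp_eq_one_iff]
  rintro ⟨n, hn⟩
  have hsn : s = n := by
    have h2πI : 2 * π * I ≠ 0 := by simp [Real.pi_ne_zero, I_ne_zero]
    exact_mod_cast mul_left_cancel₀ h2πI (hn.trans (mul_comm _ _))
  subst hsn
  have : |n| < 1 := by exact_mod_cast hs
  exact hs0 (by exact_mod_cast Int.abs_lt_one_iff.1 this)

lemma integral_exp_mul_exp_two_pi_int {w : ℂ} {n : ℤ} (hw : w ≠ 2 * π * n) (α : ℝ) :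
    ∫ t in (0:ℝ)..1, exp (I * w * t) * exp (2 * π * I * n * (α - t)) =
      exp (2 * π * I * α * n) * (exp (I * w) - 1) / (I * (w - 2 * π * n)) := by
  have hc : I * (w - 2 * π * n) ≠ 0 := mul_ne_zero I_ne_zero (sub_ne_zero.2 hw)
  have hexp : exp (I * (w - 2 * π * n)) = exp (I * w) := by
    rw [show I * (w - 2 * π * n) = I * w + (-n : ℤ) * (2 * π * I) by push_cast; ring, exp_add,
      exp_int_mul_two_pi_mul_I, mul_one]
  have hmul (t : ℝ) : exp (I * w * t) * exp (2 * π * I * n * (α - t)) =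
      exp (2 * π * I * α * n) * exp (I * (w - 2 * π * n) * t) := by
    rw [← exp_add, ← exp_add]; ring_nf
  simp_rw [hmul]
  rw [intervalIntegral.integral_const_mul, integral_exp_mul_complex hc]
  push_cast
  rw [mul_one, hexp, mul_zero, exp_zero, mul_div_assoc]

lemma integral_mul_dirichletKernel {f : ℝ → ℂ} (hf : IntervalIntegrable f volume 0 1)
    (α : ℝ) (N : ℕ) :
    ∫ t in (0:ℝ)..1, f t * dirichletKernel N (α - t) =
      ∑ n ∈ Finset.Icc (-(N : ℤ)) N,
        ∫ t in (0:ℝ)..1, f t * exp (2 * π * I * n * (α - t)) := by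
  simp only [dirichletKernel, Finset.mul_sum]
  push_cast
  exact intervalIntegral.integral_finsetSum fun n _ => hf.mul_continuousOn
    (g := fun t : ℝ => exp (2 * π * I * n * (α - t))) (Continuous.continuousOn (by fun_prop))

lemma integral_dirichletKernel (α : ℝ) (N : ℕ) :
    ∫ t in (0:ℝ)..1, dirichletKernel N (α - t) = 1 := by
  have h := integral_mul_dirichletKernel (f := fun _ => 1)
    (intervalIntegrable_const (μ := volume)) α N
  simp only [one_mul] at h
  rw [h, Finset.sum_eq_single 0]
  · simp
  · intro n _ hn
    simpa using
      integral_exp_mul_exp_two_pi_int (w := 0) (n := n) (by simp [hn, Real.pi_ne_zero]) α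
  · simp

lemma tendsto_integral_mul_exp_cocompact (h : ℝ → ℂ) (α : ℝ) :
    Tendsto (fun k : ℝ => ∫ t in (0:ℝ)..1, h t * exp (2 * π * I * k * (α - t)))
      (cocompact ℝ) (𝓝 0) := by
  refine squeeze_zero_norm (fun k => le_of_eq ?_)
    (by simpa using
      (Real.tendsto_integral_exp_smul_cocompact ((Set.Ioc (0:ℝ) 1).indicator h)).norm)
  calc ‖∫ t in (0:ℝ)..1, h t * exp (2 * π * I * k * (α - t))‖
      = ‖exp (↑(2 * π * k * α) * I) * ∫ t in (0:ℝ)..1, 𝐞 (-(t * k)) • h t‖ := by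
        rw [← intervalIntegral.integral_const_mul]
        congr 2 with t
        rw [Circle.smul_def, Real.fourierChar_apply, smul_eq_mul, ← mul_assoc, ← exp_add]
        push_cast
        ring_nf
    _ = ‖∫ t in (0:ℝ)..1, 𝐞 (-(t * k)) • h t‖ := by
        rw [norm_mul, norm_exp_ofReal_mul_I, one_mul]
    _ = ‖∫ v, 𝐞 (-(v * k)) • (Set.Ioc (0:ℝ) 1).indicator h v‖ := by
        rw [intervalIntegral.integral_of_le zero_le_one, ← integral_indicator measurableSet_Ioc]
        congr 2 with v
        by_cases hv : v ∈ Set.Ioc (0:ℝ) 1 <;> simp [hv]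

lemma dslope_exp_two_pi_I_ne_zero {α t : ℝ} (ht : |α - t| < 1) :
    dslope (fun s : ℝ => exp (2 * π * I * (α - s))) α t ≠ 0 := by
  rcases eq_or_ne t α with rfl | htα
  · have hE : HasDerivAt (fun s : ℝ => exp (2 * π * I * (t - s)))
        (exp (2 * π * I * (t - t)) * (2 * π * I * (0 - 1))) t :=
      (((hasDerivAt_const t (t : ℂ)).sub (hasDerivAt_id t).ofReal_comp).const_mul _).cexp
    rw [dslope_same, hE.deriv]
    simp [Real.pi_ne_zero, I_ne_zero]
  · rw [dslope_of_ne _ htα, slope_def_module, sub_self, mul_zero, exp_zero]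
    refine smul_ne_zero (inv_ne_zero (sub_ne_zero.2 htα)) (sub_ne_zero.2 ?_)
    exact_mod_cast exp_two_pi_I_mul_ne_one (sub_ne_zero.2 htα.symm) ht

lemma sub_mul_dirichletKernel {f : ℝ → ℂ} {α t : ℝ} (N : ℕ)
    (ht : dslope (fun s : ℝ => exp (2 * π * I * (α - s))) α t ≠ 0) :
    (f t - f α) * dirichletKernel N (α - t) =
      dslope f α t / dslope (fun s : ℝ => exp (2 * π * I * (α - s))) α t *
        (exp (2 * π * I * (N + 1 : ℝ) * (α - t)) -
          exp (2 * π * I * (-N : ℝ) * (α - t))) := by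
  have hft : (t - α) • dslope f α t = f t - f α := sub_smul_dslope f α t
  have hEt : (t - α) • dslope (fun s : ℝ => exp (2 * π * I * (α - s))) α t =
      exp (2 * π * I * (α - t)) - 1 := by
    simp [sub_smul_dslope]
  have hD := sub_one_mul_dirichletKernel N (α - t)
  rw [Complex.ofReal_sub] at hD
  rw [← hft, ← hD, ← hEt, Complex.real_smul, Complex.real_smul]
  field_simp

lemma integral_mul_dirichletKernel_sub {f : ℝ → ℂ} (hf : IntervalIntegrable f volume 0 1)
    (α : ℝ) (N : ℕ) :
    (∫ t in (0:ℝ)..1, f t * dirichletKernel N (α - t)) - f α =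
      ∫ t in (0:ℝ)..1, (f t - f α) * dirichletKernel N (α - t) := by
  have hD : ContinuousOn (fun t : ℝ => dirichletKernel N (α - t)) (Set.uIcc 0 1) :=
    Continuous.continuousOn (by unfold dirichletKernel; fun_prop)
  conv_lhs => rw [← mul_one (f α), ← integral_dirichletKernel α N,
    ← intervalIntegral.integral_const_mul]
  rw [← intervalIntegral.integral_sub (hf.mul_continuousOn hD)
    (intervalIntegrable_const.mul_continuousOn hD)]
  simp only [sub_mul]

lemma tendsto_integral_mul_dirichletKernel {f : ℝ → ℂ} {α : ℝ} (hα : α ∈ Set.Ioo 0 1)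
    (hf : ContinuousOn f (Set.Icc 0 1)) (hfα : DifferentiableAt ℝ f α) :
    Tendsto (fun N : ℕ => ∫ t in (0:ℝ)..1, f t * dirichletKernel N (α - t)) atTop
      (𝓝 (f α)) := by
  set E : ℝ → ℂ := fun s => exp (2 * π * I * (α - s))
  have hα01 : Set.Icc (0:ℝ) 1 ∈ 𝓝 α := Icc_mem_nhds hα.1 hα.2
  have hE0 : ∀ t ∈ Set.Icc (0:ℝ) 1, dslope E α t ≠ 0 := fun t ht =>
    dslope_exp_two_pi_I_ne_zero
      (abs_sub_lt_iff.2 ⟨by linarith [ht.1, hα.2], by linarith [ht.2, hα.1]⟩)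
  set g : ℝ → ℂ := fun t => dslope f α t / dslope E α t
  have hg : IntervalIntegrable g volume 0 1 :=
    ((continuousOn_dslope hα01).2 ⟨hf, hfα⟩ |>.div
      ((continuousOn_dslope hα01).2 ⟨by fun_prop, by fun_prop⟩) hE0).intervalIntegrable_of_Icc
      zero_le_one
  have hsplit (N : ℕ) : (∫ t in (0:ℝ)..1, f t * dirichletKernel N (α - t)) - f α =
      (∫ t in (0:ℝ)..1, g t * exp (2 * π * I * (N + 1 : ℝ) * (α - t))) -
        ∫ t in (0:ℝ)..1, g t * exp (2 * π * I * (-N : ℝ) * (α - t)) := by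
    rw [integral_mul_dirichletKernel_sub (hf.intervalIntegrable_of_Icc zero_le_one),
      ← intervalIntegral.integral_sub
        (hg.mul_continuousOn (Continuous.continuousOn (by fun_prop)))
        (hg.mul_continuousOn (Continuous.continuousOn (by fun_prop)))]
    refine intervalIntegral.integral_congr fun t ht => ?_
    rw [Set.uIcc_of_le zero_le_one] at ht
    rw [sub_mul_dirichletKernel N (hE0 t ht), mul_sub]
  have hup : Tendsto (fun N : ℕ => (N + 1 : ℝ)) atTop (cocompact ℝ) :=
    (tendsto_atTop_add_const_right _ 1 tendsto_natCast_atTop_atTop).mono_right atTop_le_cocompact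
  have hdown : Tendsto (fun N : ℕ => (-N : ℝ)) atTop (cocompact ℝ) :=
    (tendsto_neg_atTop_atBot.comp tendsto_natCast_atTop_atTop).mono_right atBot_le_cocompact
  rw [← tendsto_sub_nhds_zero_iff]
  simpa only [hsplit, sub_zero, Function.comp_def] using
    ((tendsto_integral_mul_exp_cocompact g α).comp hup).sub
      ((tendsto_integral_mul_exp_cocompact g α).comp hdown)

/-- For `α ∈ (0,1)` and `w ∈ ℂ` with `w ∉ 2πℤ`, the symmetric partial sums of
`∑_{n∈ℤ} e^{2πiαn}/(w − 2πn)` converge to `i e^{iαw}/(e^{iw} − 1)`. -/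
theorem sum_exp_div_linear (α : ℝ) (hα0 : 0 < α) (hα1 : α < 1) (w : ℂ)
    (hw : ∀ n : ℤ, w ≠ 2 * (Real.pi : ℂ) * (n : ℂ)) :
    Tendsto
      (fun N : ℕ => ∑ n ∈ Finset.Icc (-(N : ℤ)) (N : ℤ),
        Complex.exp (2 * (Real.pi : ℂ) * Complex.I * (α : ℂ) * (n : ℂ)) /
          (w - 2 * (Real.pi : ℂ) * (n : ℂ)))
      atTop
      (nhds (Complex.I * Complex.exp (Complex.I * (α : ℂ) * w) /
        (Complex.exp (Complex.I * w) - 1))) := by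
  have hexp : exp (I * w) - 1 ≠ 0 := by
    rw [sub_ne_zero, Ne, Complex.exp_eq_one_iff]
    rintro ⟨n, hn⟩
    exact hw n (mul_left_cancel₀ I_ne_zero (by rw [hn]; ring))
  have hsum (N : ℕ) :
      ∑ n ∈ Finset.Icc (-(N : ℤ)) N, exp (2 * π * I * α * n) / (w - 2 * π * n) =
        I / (exp (I * w) - 1) *
          ∫ t in (0:ℝ)..1, exp (I * w * t) * dirichletKernel N (α - t) := by
    rw [integral_mul_dirichletKernel (Continuous.intervalIntegrable (by fun_prop) 0 1),
      Finset.mul_sum]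
    refine Finset.sum_congr rfl fun n _ => ?_
    rw [integral_exp_mul_exp_two_pi_int (hw n)]
    field_simp [sub_ne_zero.2 (hw n)]
  have hlim := tendsto_integral_mul_dirichletKernel ⟨hα0, hα1⟩
    (f := fun t : ℝ => exp (I * w * t)) (by fun_prop) (by fun_prop)
  simp only [hsum]
  convert hlim.const_mul (I / (exp (I * w) - 1)) using 2
  ring_nf
end

section
/- Let α ∈ (0,1) and let z ∈ ℂ with e^z ≠ −1. Then the family k ↦ e^{−2πiαk} (1/(z + i(2k+1)π) − 1/(z + i(2k−1)π)), indexed by k ∈ ℤ, is summable and ∑_{k∈ℤ} e^{−2πiαk} (1/(z + i(2k+1)π) − 1/(z + i(2k−1)π)) = (2/i) sin(πα) e^{αz}/(1 + e^z). -/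
/-!
Put `w = -z - πi`, so that `e^w = -e^{-z} ≠ 1`. The function `x ↦ e^{x(w+2πi)} - e^{xw}` agrees
at the two ends of `[0, 1]`, and its `n`-th Fourier coefficient on `[0, 1]` is
`(e^w - 1)(1/(w - 2πi(n-1)) - 1/(w - 2πin))`, which is `O(1/n²)`. Hence its Fourier series
converges to it everywhere; at `x = 1 - α`, after division by `e^w - 1`, this is the stated series,
because `w - 2πin = -(z + i(2n+1)π)`.
-/

open Complex Real Set

theorem hasSum_fourierCoeffOn_smul_fourier {a b : ℝ} (hab : a < b) {f : ℝ → ℂ}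
    (hf : ContinuousOn f (Icc a b)) (hfab : f a = f b) (hs : Summable (fourierCoeffOn hab f))
    {x : ℝ} (hx : x ∈ Ioc a b) :
    HasSum (fun n ↦ fourierCoeffOn hab f n • fourier n (x : AddCircle (b - a))) (f x) := by
  have : Fact (0 < b - a) := ⟨sub_pos.mpr hab⟩
  have hb : a + (b - a) = b := add_sub_cancel a b
  let g : C(AddCircle (b - a), ℂ) :=
    ⟨AddCircle.liftIoc (b - a) a f, AddCircle.liftIoc_continuous (by rwa [hb]) (by rwa [hb])⟩
  have hg : g x = f x := AddCircle.liftIoc_coe_apply (by rwa [hb])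
  rw [← hg]
  exact has_pointwise_sum_fourier_series_of_summable (f := g) hs x

theorem fourierCoeffOn_sub {E : Type*} [NormedAddCommGroup E] [NormedSpace ℂ E] [CompleteSpace E]
    {a b : ℝ} (hab : a < b) {f g : ℝ → E}
    (hf : IntervalIntegrable f MeasureTheory.volume a b)
    (hg : IntervalIntegrable g MeasureTheory.volume a b) (n : ℤ) :
    fourierCoeffOn hab (fun x ↦ f x - g x) n = fourierCoeffOn hab f n - fourierCoeffOn hab g n := by
  have hfourier : ContinuousOn (fun x : ℝ ↦ fourier (-n) (x : AddCircle (b - a))) (uIcc a b) :=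
    ((map_continuous _).comp (AddCircle.continuous_mk' _)).continuousOn
  simp only [fourierCoeffOn_eq_integral, smul_sub]
  rw [intervalIntegral.integral_sub (hf.continuousOn_smul hfourier) (hg.continuousOn_smul hfourier),
    smul_sub]

theorem fourierCoeffOn_exp_mul {v : ℂ} {n : ℤ} (hv : v ≠ n * (2 * π * I)) :
    fourierCoeffOn zero_lt_one (fun x : ℝ ↦ exp (x * v)) n
      = (exp v - 1) / (v - n * (2 * π * I)) := by
  have hexp : ∀ x : ℝ, fourier (-n) (x : AddCircle ((1 : ℝ) - 0)) • exp (x * v)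
      = exp ((v - n * (2 * π * I)) * x) := fun x ↦ by
    rw [fourier_coe_apply, smul_eq_mul, ← Complex.exp_add]
    congr 1
    push_cast
    ring
  simp only [fourierCoeffOn_eq_integral, hexp, integral_exp_mul_complex (sub_ne_zero.mpr hv)]
  rw [Complex.ofReal_one, Complex.ofReal_zero, mul_one, mul_zero, Complex.exp_zero,
    Complex.exp_sub, exp_int_mul_two_pi_mul_I, div_one, sub_zero, div_one, one_smul]

theorem summable_one_div_sub_int_mul_sub {c w : ℂ} (hc : c ≠ 0) (hw : ∀ n : ℤ, w ≠ n * c) :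
    Summable fun n : ℤ ↦ 1 / (w - (n - 1) * c) - 1 / (w - n * c) := by
  -- the summand is `-c⁻¹ ((n - u) (n - u - 1))⁻¹` with `u = w / c`
  refine ((EisensteinSeries.summable_linear_right_add_one_mul_linear_right
    (-w / c - 1) 1 1).mul_left (-c⁻¹)).congr fun n ↦ ?_
  have h1 : w - (n - 1) * c ≠ 0 := by
    have := hw (n - 1); push_cast at this; exact sub_ne_zero.mpr this
  have h2 : w - n * c ≠ 0 := sub_ne_zero.mpr (hw n)
  have hprod :
      (-w / c - 1 + n + 1) * (-w / c - 1 + n) = (w - n * c) * (w - (n - 1) * c) / c ^ 2 := by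
    field_simp
    ring
  rw [Int.cast_one, one_mul, hprod, div_sub_div _ _ h1 h2]
  field_simp
  ring

theorem hasSum_fourier_exp_mul_sub_exp_mul {w : ℂ} (hw : exp w ≠ 1) {x : ℝ} (hx : x ∈ Ioc 0 1) :
    HasSum (fun n : ℤ ↦ (exp w - 1) * (1 / (w - (n - 1) * (2 * π * I)) - 1 / (w - n * (2 * π * I)))
        * exp (2 * π * I * n * x))
      (exp (x * (w + 2 * π * I)) - exp (x * w)) := by
  have hw_int : ∀ n : ℤ, w ≠ n * (2 * π * I) := fun n h ↦ hw (h ▸ exp_int_mul_two_pi_mul_I n)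
  have hcont : Continuous fun x : ℝ ↦ exp (x * (w + 2 * π * I)) - exp (x * w) := by fun_prop
  have hcoeff : ∀ n : ℤ,
      fourierCoeffOn zero_lt_one (fun x : ℝ ↦ exp (x * (w + 2 * π * I)) - exp (x * w)) n
        = (exp w - 1) * (1 / (w - (n - 1) * (2 * π * I)) - 1 / (w - n * (2 * π * I))) := by
    intro n
    have hshift : w + 2 * π * I - n * (2 * π * I) = w - (n - 1) * (2 * π * I) := by ring
    have hw_succ : w + 2 * π * I ≠ n * (2 * π * I) := by
      rw [← sub_ne_zero, hshift, sub_ne_zero]; exact_mod_cast hw_int (n - 1)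
    rw [fourierCoeffOn_sub zero_lt_one (f := fun x : ℝ ↦ exp (x * (w + 2 * π * I)))
        (g := fun x : ℝ ↦ exp (x * w)) ((by fun_prop : Continuous _).intervalIntegrable _ _)
        ((by fun_prop : Continuous _).intervalIntegrable _ _), fourierCoeffOn_exp_mul hw_succ,
      fourierCoeffOn_exp_mul (hw_int n), Complex.exp_add, exp_two_pi_mul_I, mul_one, hshift]
    ring
  have hsum := hasSum_fourierCoeffOn_smul_fourier zero_lt_one hcont.continuousOn
    (by simp [Complex.exp_add])
    ((summable_one_div_sub_int_mul_sub two_pi_I_ne_zero hw_int).mul_left (exp w - 1) |>.congr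
      fun n ↦ (hcoeff n).symm) hx
  simpa only [hcoeff, fourier_coe_apply, smul_eq_mul, sub_zero, Complex.ofReal_one, div_one]
    using hsum

theorem exp_neg_sub_pi_mul_I_sub_one (z : ℂ) :
    exp (-z - π * I) - 1 = -(1 + exp z) / exp z := by
  rw [Complex.exp_sub, exp_pi_mul_I, Complex.exp_neg]
  field_simp
  ring

theorem two_div_I_mul_sin_mul_exp_div_one_add_exp (α : ℝ) {z : ℂ} (hz : 1 + exp z ≠ 0) :
    2 / I * Real.sin (π * α) * exp (α * z) / (1 + exp z)
      = (exp (((1 - α : ℝ) : ℂ) * (-z - π * I + 2 * π * I))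
          - exp (((1 - α : ℝ) : ℂ) * (-z - π * I))) / (exp (-z - π * I) - 1) := by
  set A := exp (π * α * I)
  have hsin : (Real.sin (π * α) : ℂ) = (A⁻¹ - A) * I / 2 := by
    rw [Complex.ofReal_sin, eq_div_iff two_ne_zero, mul_comm, two_sin, neg_mul, Complex.exp_neg]
    push_cast
    ring
  have hexp : exp (((1 - α : ℝ) : ℂ) * (-z - π * I)) = -(A * exp (α * z) / exp z) := by
    rw [show ((1 - α : ℝ) : ℂ) * (-z - π * I) = π * α * I + α * z - z - π * I by push_cast; ring,
      Complex.exp_sub, Complex.exp_sub, Complex.exp_add, exp_pi_mul_I]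
    ring
  have hexp' : exp (((1 - α : ℝ) : ℂ) * (-z - π * I + 2 * π * I))
      = exp (((1 - α : ℝ) : ℂ) * (-z - π * I)) / (A * A) := by
    rw [show ((1 - α : ℝ) : ℂ) * (-z - π * I + 2 * π * I)
          = ((1 - α : ℝ) : ℂ) * (-z - π * I) + 2 * π * I - (π * α * I + π * α * I) by
        push_cast; ring,
      Complex.exp_sub, Complex.exp_add, Complex.exp_add, exp_two_pi_mul_I, mul_one]
  rw [hexp', hexp, exp_neg_sub_pi_mul_I_sub_one, hsin]
  field_simp
  ring

/-- For `α ∈ (0,1)` and `z ∈ ℂ` with `e^z ≠ −1`,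
`∑_{k∈ℤ} e^{−2πiαk} (1/(z + i(2k+1)π) − 1/(z + i(2k−1)π)) = (2/i) sin(πα) e^{αz}/(1 + e^z)`,
the family being summable. -/
theorem sum_paired_fractions (α : ℝ) (hα0 : 0 < α) (hα1 : α < 1) (z : ℂ)
    (hz : Complex.exp z ≠ -1) :
    HasSum
      (fun k : ℤ => Complex.exp (-(2 * (Real.pi : ℂ) * Complex.I * (α : ℂ) * (k : ℂ))) *
        (1 / (z + Complex.I * (2 * (k : ℂ) + 1) * (Real.pi : ℂ)) -
          1 / (z + Complex.I * (2 * (k : ℂ) - 1) * (Real.pi : ℂ))))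
      ((2 / Complex.I) * (Real.sin (Real.pi * α) : ℂ) * Complex.exp ((α : ℂ) * z) /
        (1 + Complex.exp z)) := by
  have h1z : 1 + exp z ≠ 0 := fun h ↦ hz (by linear_combination h)
  have hw : exp (-z - π * I) ≠ 1 := by
    rw [← sub_ne_zero, exp_neg_sub_pi_mul_I_sub_one]
    exact div_ne_zero (neg_ne_zero.mpr h1z) (exp_ne_zero z)
  rw [two_div_I_mul_sin_mul_exp_div_one_add_exp α h1z]
  refine ((hasSum_fourier_exp_mul_sub_exp_mul hw (x := 1 - α)
    ⟨by linarith, by linarith⟩).div_const _).congr_fun fun k ↦ ?_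
  have hphase : exp (2 * π * I * k * ((1 - α : ℝ) : ℂ)) = exp (-(2 * π * I * α * k)) := by
    rw [show 2 * π * I * k * ((1 - α : ℝ) : ℂ) = k * (2 * π * I) + -(2 * π * I * α * k) by
      push_cast; ring, Complex.exp_add, exp_int_mul_two_pi_mul_I, one_mul]
  rw [hphase, show -z - π * I - (k - 1) * (2 * π * I) = -(z + I * (2 * k - 1) * π) by ring,
    show -z - π * I - k * (2 * π * I) = -(z + I * (2 * k + 1) * π) by ring]
  field_simp
  ring
end

section
/- Let 0 < α < 1 and let F : [0,∞) → ℂ be measurable, locally integrable, and satisfy F(u) = e^{−αu}(1 + O(e^{−u})) as u → +∞ (i.e. |F(u) − e^{−αu}| ≤ C e^{−(1+α)u} for some constant C and all sufficiently large u). Then, as ε → 0+, ∫₀^{∞} exp(−2ε cosh u) F(u) du = ∫₀^{∞} F(u) du + Γ(−α) ε^{α} + O(ε). -/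
/-!
Write `exp (-2ε cosh u) = exp (-ε eᵘ) · exp (-ε e⁻ᵘ)`. On `u ≥ 0` the second factor is `1 + O(ε)`,
and the first is `1 + O(ε eᵘ)`, which is harmless against `F u - e^{-αu} = O(e^{-(1+α)u})`.
Hence the left side equals `∫ F + ∫₀^∞ (exp (-ε eᵘ) - 1) e^{-αu} du + O(ε)`. The substitution
`t = ε eᵘ` turns the last integral into `ε^α ∫_ε^∞ (e⁻ᵗ - 1) t^{-α-1} dt`, and an integration by
parts expresses this through `∫_ε^∞ e⁻ᵗ t^{-α} dt = Γ(1 - α) - O(ε^{1-α}) = -α Γ(-α) - O(ε^{1-α})`.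
-/

open MeasureTheory Set Filter Asymptotics Real Topology

lemma abs_exp_neg_sub_one_le {x : ℝ} (hx : 0 ≤ x) : |exp (-x) - 1| ≤ x := by
  rw [abs_sub_comm, abs_of_nonneg (by simpa using exp_le_one_iff.mpr (neg_nonpos.mpr hx))]
  linarith [one_sub_le_exp_neg x]

lemma abs_exp_neg_two_mul_cosh_sub_le {ε u : ℝ} (hε : 0 ≤ ε) (hu : 0 ≤ u) :
    |exp (-(2 * ε * cosh u)) - exp (-(ε * exp u))| ≤ ε := by
  have hsplit : exp (-(2 * ε * cosh u)) = exp (-(ε * exp u)) * exp (-(ε * exp (-u))) := by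
    rw [← exp_add, cosh_eq]; ring_nf
  have hB : |exp (-(ε * exp u))| ≤ 1 := by
    rw [abs_of_pos (exp_pos _), exp_le_one_iff]; have := exp_pos u; nlinarith
  calc |exp (-(2 * ε * cosh u)) - exp (-(ε * exp u))|
      = |exp (-(ε * exp u))| * |exp (-(ε * exp (-u))) - 1| := by
        rw [hsplit, ← abs_mul, mul_sub, mul_one]
    _ ≤ 1 * (ε * exp (-u)) :=
        mul_le_mul hB (abs_exp_neg_sub_one_le (by positivity)) (abs_nonneg _) zero_le_one
    _ ≤ ε := by rw [one_mul]; exact mul_le_of_le_one_right hε (exp_le_one_iff.mpr (by linarith))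

lemma norm_exp_neg_two_mul_cosh_mul_sub_le {ε u : ℝ} (hε : 0 ≤ ε) (hu : 0 ≤ u) (z w : ℂ) :
    ‖(exp (-(2 * ε * cosh u)) : ℂ) * z - z - ((exp (-(ε * exp u)) - 1 : ℝ) : ℂ) * w‖
      ≤ ε * (‖z‖ + exp u * ‖z - w‖) := by
  have hdecomp : (exp (-(2 * ε * cosh u)) : ℂ) * z - z - ((exp (-(ε * exp u)) - 1 : ℝ) : ℂ) * w
      = ((exp (-(2 * ε * cosh u)) - exp (-(ε * exp u)) : ℝ) : ℂ) * z
        + ((exp (-(ε * exp u)) - 1 : ℝ) : ℂ) * (z - w) := by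
    push_cast; ring
  rw [hdecomp, mul_add, ← mul_assoc]
  refine (norm_add_le _ _).trans (add_le_add ?_ ?_) <;>
    rw [norm_mul, Complex.norm_real, Real.norm_eq_abs] <;> gcongr
  · exact abs_exp_neg_two_mul_cosh_sub_le hε hu
  · exact abs_exp_neg_sub_one_le (by positivity)

lemma integrableOn_Ioi_of_isBigO_exp_neg {E : Type*} [NormedAddCommGroup E] {f : ℝ → E}
    {a b : ℝ} (hb : 0 < b) (hf : LocallyIntegrableOn f (Ici a))
    (ho : f =O[atTop] fun u => exp (-(b * u))) : IntegrableOn f (Ioi a) :=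
  (hf.integrableOn_of_isBigO_atTop ho
    ⟨Ioi 0, Ioi_mem_atTop 0, by simpa only [neg_mul] using exp_neg_integrableOn_Ioi 0 hb⟩).mono_set
    Ioi_subset_Ici_self

lemma integrableOn_exp_mul_norm_of_isBigO {E : Type*} [NormedAddCommGroup E] {f : ℝ → E}
    {a b : ℝ} (hb : 1 < b) (hf : LocallyIntegrableOn f (Ici a))
    (ho : f =O[atTop] fun u => exp (-(b * u))) :
    IntegrableOn (fun u => exp u * ‖f u‖) (Ioi a) := by
  refine integrableOn_Ioi_of_isBigO_exp_neg (b := b - 1) (by linarith)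
    (hf.norm.continuousOn_mul continuous_exp.continuousOn isClosed_Ici.isLocallyClosed) ?_
  refine ((isBigO_refl exp atTop).mul ho.norm_left).congr_right fun u => ?_
  rw [← exp_add]; ring_nf

section MainTerm

variable {α ε : ℝ}

lemma integrableOn_Ioi_exp_neg_mul_rpow (hε : 0 < ε) (s : ℝ) :
    IntegrableOn (fun t => exp (-t) * t ^ s) (Ioi ε) :=
  integrable_of_isBigO_exp_neg one_half_pos
    (continuousOn_id.neg.rexp.mul (continuousOn_id.rpow_const fun _ ht =>
      Or.inl (hε.trans_le ht).ne'))
    (Gamma_integrand_isLittleO s).isBigO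

lemma integral_Ioi_exp_neg_sub_one_mul_rpow (hα : 0 < α) (hε : 0 < ε) :
    ∫ t in Ioi ε, (exp (-t) - 1) * t ^ (-α - 1)
      = α⁻¹ * (exp (-ε) - 1) * ε ^ (-α) - α⁻¹ * ∫ t in Ioi ε, exp (-t) * t ^ (-α) := by
  have hu : ∀ t ∈ Ioi ε, HasDerivAt (fun t => exp (-t) - 1) (-exp (-t)) t := fun t _ => by
    simpa using ((hasDerivAt_neg t).exp.sub_const 1)
  have hv : ∀ t ∈ Ioi ε, HasDerivAt (fun t => -(α⁻¹ * t ^ (-α))) (t ^ (-α - 1)) t :=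
    fun t ht => ((hasDerivAt_rpow_const (Or.inl (hε.trans ht).ne')).const_mul α⁻¹).neg.congr_deriv
      (by rw [neg_mul, mul_neg, neg_neg, inv_mul_cancel_left₀ hα.ne'])
  have huv' : IntegrableOn (fun t => (exp (-t) - 1) * t ^ (-α - 1)) (Ioi ε) := by
    simp only [sub_mul, one_mul]
    exact (integrableOn_Ioi_exp_neg_mul_rpow hε _).sub
      (integrableOn_Ioi_rpow_of_lt (by linarith) hε)
  have hu'v : IntegrableOn (fun t => -exp (-t) * -(α⁻¹ * t ^ (-α))) (Ioi ε) := by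
    simp only [neg_mul_neg, mul_left_comm (exp _)]
    exact (integrableOn_Ioi_exp_neg_mul_rpow hε (-α)).const_mul α⁻¹
  have h_zero : Tendsto (fun t => (exp (-t) - 1) * -(α⁻¹ * t ^ (-α))) (𝓝[>] ε)
      (𝓝 ((exp (-ε) - 1) * -(α⁻¹ * ε ^ (-α)))) :=
    (((continuous_exp.comp continuous_neg).sub continuous_const).continuousAt.mul
      ((continuousAt_rpow_const _ _ (Or.inl hε.ne')).const_mul α⁻¹).neg).tendsto.mono_left
      nhdsWithin_le_nhds
  have h_infty : Tendsto (fun t => (exp (-t) - 1) * -(α⁻¹ * t ^ (-α))) atTop (𝓝 0) := by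
    simpa using ((tendsto_exp_neg_atTop_nhds_zero.sub_const 1).mul
      ((tendsto_rpow_neg_atTop hα).const_mul α⁻¹).neg)
  rw [integral_Ioi_mul_deriv_eq_deriv_mul hu hv huv' hu'v h_zero h_infty]
  simp only [neg_mul_neg, mul_left_comm _ α⁻¹, integral_const_mul]
  ring

lemma integrableOn_exp_neg_mul_rpow_neg (hα1 : α < 1) :
    IntegrableOn (fun t => exp (-t) * t ^ (-α)) (Ioi 0) := by
  simpa using GammaIntegral_convergent (s := 1 - α) (by linarith)

lemma integral_Ioi_exp_neg_mul_rpow_neg (hα0 : 0 < α) (hα1 : α < 1) :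
    ∫ t in Ioi 0, exp (-t) * t ^ (-α) = -α * Gamma (-α) := by
  rw [← Gamma_add_one (neg_ne_zero.mpr hα0.ne'), Gamma_eq_integral (by linarith)]
  norm_num

lemma integral_Ioc_exp_neg_mul_rpow_le (hα1 : α < 1) (hε : 0 ≤ ε) :
    ∫ t in Ioc 0 ε, exp (-t) * t ^ (-α) ≤ ε ^ (1 - α) / (1 - α) := by
  have hpow : IntegrableOn (fun t : ℝ => t ^ (-α)) (Ioc 0 ε) :=
    (intervalIntegrable_iff_integrableOn_Ioc_of_le hε).mp
      (intervalIntegral.intervalIntegrable_rpow' (by linarith))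
  calc ∫ t in Ioc 0 ε, exp (-t) * t ^ (-α)
      ≤ ∫ t in Ioc 0 ε, t ^ (-α) := by
        refine setIntegral_mono_on ((integrableOn_exp_neg_mul_rpow_neg hα1).mono_set
          Ioc_subset_Ioi_self) hpow measurableSet_Ioc fun t ht => ?_
        exact mul_le_of_le_one_left (rpow_nonneg ht.1.le _)
          (exp_le_one_iff.mpr (by linarith [ht.1]))
    _ = ε ^ (1 - α) / (1 - α) := by
        rw [← intervalIntegral.integral_of_le hε, integral_rpow (Or.inl (by linarith)),
          zero_rpow (by linarith), sub_zero, neg_add_eq_sub]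

lemma rpow_mul_integral_Ioi_exp_neg_sub_one_mul_rpow (hα0 : 0 < α) (hα1 : α < 1) (hε : 0 < ε) :
    ε ^ α * ∫ t in Ioi ε, (exp (-t) - 1) * t ^ (-α - 1)
      = Gamma (-α) * ε ^ α + α⁻¹ * (exp (-ε) - 1)
        + α⁻¹ * ε ^ α * ∫ t in Ioc 0 ε, exp (-t) * t ^ (-α) := by
  have hsplit := integral_Ioi_exp_neg_mul_rpow_neg hα0 hα1
  rw [← Ioc_union_Ioi_eq_Ioi hε.le, setIntegral_union (Ioc_disjoint_Ioi le_rfl)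
    measurableSet_Ioi ((integrableOn_exp_neg_mul_rpow_neg hα1).mono_set Ioc_subset_Ioi_self)
    (integrableOn_Ioi_exp_neg_mul_rpow hε _)] at hsplit
  have hinv : ε ^ α * ε ^ (-α) = 1 := by rw [← rpow_add hε, add_neg_cancel, rpow_zero]
  rw [integral_Ioi_exp_neg_sub_one_mul_rpow hα0 hε]
  field_simp
  linear_combination (-ε ^ α) * hsplit + (exp (-ε) - 1) * hinv

lemma integral_Ioi_exp_neg_mul_exp_sub_one_mul_exp (hε : 0 < ε) :
    ∫ u in Ioi 0, (exp (-(ε * exp u)) - 1) * exp (-(α * u))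
      = ε ^ α * ∫ t in Ioi ε, (exp (-t) - 1) * t ^ (-α - 1) := by
  rw [← mul_one ε, ← integral_comp_mul_left_Ioi' _ _ hε, mul_one, ← exp_zero,
    ← integral_comp_exp_Ioi, exp_zero, smul_eq_mul, ← mul_assoc, ← integral_const_mul]
  refine setIntegral_congr_fun measurableSet_Ioi fun u _ => ?_
  have hpow : ε ^ α * ε * ε ^ (-α - 1) = 1 := by
    rw [← rpow_add_one hε.ne', ← rpow_add hε]; norm_num
  have hexp : exp u * exp (u * (-α - 1)) = exp (-(α * u)) := by rw [← exp_add]; ring_nf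
  rw [smul_eq_mul, mul_rpow hε.le (exp_pos u).le, ← exp_mul]
  linear_combination (-(exp (-(ε * exp u)) - 1) * (exp u * exp (u * (-α - 1)))) * hpow
    - (exp (-(ε * exp u)) - 1) * hexp

lemma abs_integral_exp_neg_mul_exp_sub_one_mul_exp_sub_le (hα0 : 0 < α) (hα1 : α < 1)
    (hε : 0 < ε) :
    |(∫ u in Ioi 0, (exp (-(ε * exp u)) - 1) * exp (-(α * u))) - Gamma (-α) * ε ^ α|
      ≤ (α⁻¹ + (α * (1 - α))⁻¹) * ε := by
  rw [integral_Ioi_exp_neg_mul_exp_sub_one_mul_exp hε,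
    rpow_mul_integral_Ioi_exp_neg_sub_one_mul_rpow hα0 hα1 hε, add_assoc, add_sub_cancel_left,
    add_mul]
  set I := ∫ t in Ioc 0 ε, exp (-t) * t ^ (-α)
  have hI0 : 0 ≤ I := setIntegral_nonneg measurableSet_Ioc fun t ht => by have := ht.1; positivity
  have hI : ε ^ α * I ≤ ε / (1 - α) := by
    calc ε ^ α * I ≤ ε ^ α * (ε ^ (1 - α) / (1 - α)) := by
          gcongr; exact integral_Ioc_exp_neg_mul_rpow_le hα1 hε.le
      _ = ε / (1 - α) := by rw [← mul_div_assoc, ← rpow_add hε, add_sub_cancel, rpow_one]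
  have hexp := abs_exp_neg_sub_one_le hε.le
  calc |α⁻¹ * (exp (-ε) - 1) + α⁻¹ * ε ^ α * I|
      ≤ α⁻¹ * |exp (-ε) - 1| + α⁻¹ * (ε ^ α * I) := by
        rw [mul_assoc]
        refine (abs_add_le _ _).trans_eq ?_
        rw [abs_mul, abs_mul, abs_of_pos (inv_pos.mpr hα0),
          abs_of_nonneg (a := ε ^ α * I) (by positivity)]
    _ ≤ α⁻¹ * ε + α⁻¹ * (ε / (1 - α)) := by gcongr
    _ = α⁻¹ * ε + (α * (1 - α))⁻¹ * ε := by rw [mul_inv]; ring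

end MainTerm

lemma norm_integral_exp_neg_two_mul_cosh_mul_sub_le {F G : ℝ → ℂ} {ε : ℝ} (hε : 0 ≤ ε)
    (hF : IntegrableOn F (Ioi 0)) (hG : IntegrableOn G (Ioi 0))
    (hFG : IntegrableOn (fun u => exp u * ‖F u - G u‖) (Ioi 0)) :
    ‖(∫ u in Ioi 0, (exp (-(2 * ε * cosh u)) : ℂ) * F u) - (∫ u in Ioi 0, F u)
        - ∫ u in Ioi 0, ((exp (-(ε * exp u)) - 1 : ℝ) : ℂ) * G u‖
      ≤ ε * ((∫ u in Ioi 0, ‖F u‖) + ∫ u in Ioi 0, exp u * ‖F u - G u‖) := by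
  have hA : IntegrableOn (fun u => (exp (-(2 * ε * cosh u)) : ℂ) * F u) (Ioi 0) := by
    refine hF.bdd_mul (c := 1) (by fun_prop : Continuous _).aestronglyMeasurable
      (ae_of_all _ fun u => ?_)
    rw [Complex.norm_real, norm_of_nonneg (exp_pos _).le, exp_le_one_iff]
    have := cosh_pos u
    nlinarith
  have hB : IntegrableOn (fun u => ((exp (-(ε * exp u)) - 1 : ℝ) : ℂ) * G u) (Ioi 0) := by
    refine hG.bdd_mul (c := 1) (by fun_prop : Continuous _).aestronglyMeasurable
      (ae_of_all _ fun u => ?_)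
    have hle : exp (-(ε * exp u)) ≤ 1 := exp_le_one_iff.mpr (by have := exp_pos u; nlinarith)
    rw [Complex.norm_real, Real.norm_eq_abs, abs_le]
    constructor <;> linarith [exp_pos (-(ε * exp u))]
  have hAF : IntegrableOn (fun u => (exp (-(2 * ε * cosh u)) : ℂ) * F u - F u) (Ioi 0) :=
    hA.sub hF
  rw [← integral_sub hA hF, ← integral_sub hAF hB, ← integral_add hF.norm hFG,
    ← integral_const_mul]
  refine norm_integral_le_of_norm_le ((hF.norm.add hFG).const_mul ε) ?_
  filter_upwards [ae_restrict_mem measurableSet_Ioi] with u hu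
  exact norm_exp_neg_two_mul_cosh_mul_sub_le hε (le_of_lt hu) (F u) (G u)

theorem asympt_single_general_general (α : ℝ) (hα0 : 0 < α) (hα1 : α < 1) (F : ℝ → ℂ)
    (hFloc : MeasureTheory.LocallyIntegrableOn F (Set.Ici 0))
    (C₁ u₀ : ℝ) (hF : ∀ u : ℝ, u₀ ≤ u →
      ‖F u - (Real.exp (-(α * u)) : ℂ)‖ ≤ C₁ * Real.exp (-((1 + α) * u))) :
    ∃ C ε₀ : ℝ, 0 < ε₀ ∧ ∀ ε : ℝ, 0 < ε → ε ≤ ε₀ →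
      ‖(∫ u in Set.Ioi (0:ℝ), (Real.exp (-(2 * ε * Real.cosh u)) : ℂ) * F u)
          - (∫ u in Set.Ioi (0:ℝ), F u)
          - ((Real.Gamma (-α) * ε ^ α : ℝ) : ℂ)‖ ≤ C * ε := by
  have hE : IntegrableOn (fun u => exp (-(α * u))) (Ioi 0) := by
    simpa only [neg_mul] using exp_neg_integrableOn_Ioi 0 hα0
  have hG : IntegrableOn (fun u => (exp (-(α * u)) : ℂ)) (Ioi 0) := hE.ofReal
  have hloc : LocallyIntegrableOn (fun u => F u - exp (-(α * u))) (Ici 0) :=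
    hFloc.sub ((Continuous.continuousOn (by fun_prop)).locallyIntegrableOn measurableSet_Ici)
  have hdecay : (fun u => F u - exp (-(α * u))) =O[atTop] fun u => exp (-((1 + α) * u)) :=
    IsBigO.of_bound C₁ ((eventually_ge_atTop u₀).mono fun u hu => by
      rw [norm_of_nonneg (exp_pos _).le]; exact hF u hu)
  have hFint : IntegrableOn F (Ioi 0) :=
    ((integrableOn_Ioi_of_isBigO_exp_neg (by linarith) hloc hdecay).add hG).congr_fun
      (fun u _ => sub_add_cancel _ _) measurableSet_Ioi
  have hweighted := integrableOn_exp_mul_norm_of_isBigO (by linarith) hloc hdecay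
  refine ⟨(∫ u in Ioi 0, ‖F u‖) + (∫ u in Ioi 0, exp u * ‖F u - exp (-(α * u))‖)
    + (α⁻¹ + (α * (1 - α))⁻¹), 1, one_pos, fun ε hε _ => ?_⟩
  have hrem := norm_integral_exp_neg_two_mul_cosh_mul_sub_le hε.le hFint hG hweighted
  have hmain := abs_integral_exp_neg_mul_exp_sub_one_mul_exp_sub_le hα0 hα1 hε
  simp only [← Complex.ofReal_mul, integral_complex_ofReal] at hrem
  refine (norm_sub_le_norm_sub_add_norm_sub _
    ((∫ u in Ioi 0, (exp (-(ε * exp u)) - 1) * exp (-(α * u)) : ℝ) : ℂ) _).trans ?_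
  rw [← Complex.ofReal_sub, Complex.norm_real, Real.norm_eq_abs]
  linarith

/-- Step 1 of Appendix B, first part: if `0 < α < 1` and
`F(u) = e^{−αu}(1 + O(e^{−u}))` as `u → +∞`, then as `ε → 0+`,
`∫₀^∞ exp(−2ε cosh u) F(u) du = ∫₀^∞ F(u) du + Γ(−α) ε^α + O(ε)`. -/
theorem asympt_single_general (α : ℝ) (hα0 : 0 < α) (hα1 : α < 1) (F : ℝ → ℂ)
    (hFmeas : Measurable F)
    (hFloc : MeasureTheory.LocallyIntegrableOn F (Set.Ici 0))
    (C₁ u₀ : ℝ) (hF : ∀ u : ℝ, u₀ ≤ u →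
      ‖F u - (Real.exp (-(α * u)) : ℂ)‖ ≤ C₁ * Real.exp (-((1 + α) * u))) :
    ∃ C ε₀ : ℝ, 0 < ε₀ ∧ ∀ ε : ℝ, 0 < ε → ε ≤ ε₀ →
      ‖(∫ u in Set.Ioi (0:ℝ), (Real.exp (-(2 * ε * Real.cosh u)) : ℂ) * F u)
          - (∫ u in Set.Ioi (0:ℝ), F u)
          - ((Real.Gamma (-α) * ε ^ α : ℝ) : ℂ)‖ ≤ C * ε :=
  asympt_single_general_general α hα0 hα1 F hFloc C₁ u₀ hF
end

section
/- Let X > 0, 0 < α < 1 and φ ∈ (−π, π). Then, as ε → 0+, ∫_{−∞}^{∞} exp(−X e^{u} − 2εX cosh u) · e^{αu}/(1 + e^{u + iφ}) du = ∫_{−∞}^{∞} exp(−X e^{u}) · e^{αu}/(1 + e^{u + iφ}) du + Γ(−α) X^{α} ε^{α} + O(ε). -/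
/-!
With `t = e^u`, `q = e^{-Xt} / (1 + t e^{iφ})`, `a = e^{-εXt}` and `b = e^{-εX/t}`, the two
integrands are `e^{αu} q a b` and `e^{αu} q`, and
`q a b - q - (b - 1) = (b - 1)(q - 1) + q b (a - 1)`.
Since `|1 + t e^{iφ}| ≥ cos(φ/2) (1 + t)`, `|b - 1| ≤ εX/t`, `|a - 1| ≤ εXt` and `Xt e^{-Xt} ≤ 1`,
both terms are `O(ε / (1 + t))`, and `e^{αu} / (1 + e^u)` is integrable for `0 < α < 1`.
The remaining integral `∫ e^{αu} (e^{-εX e^{-u}} - 1) du` is a Cauchy–Saalschütz integral,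
equal to `Γ(-α) (εX)^α`.
-/

open MeasureTheory Set

namespace AsymptSingle

open Real

lemma abs_exp_neg_sub_one_le_min {x : ℝ} (hx : 0 ≤ x) : |exp (-x) - 1| ≤ min 1 x := by
  rw [abs_sub_comm, abs_of_nonneg (sub_nonneg.2 (exp_le_one_iff.2 (by linarith)))]
  exact le_min (by linarith [exp_pos (-x)]) (by linarith [add_one_le_exp (-x)])

lemma mul_exp_neg_mul_le_inv {s : ℝ} (hs : 0 < s) (y : ℝ) : y * exp (-(s * y)) ≤ s⁻¹ := by
  have h := (mul_exp_neg_le_exp_neg_one (s * y)).trans (exp_le_one_iff.2 (by norm_num))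
  calc y * exp (-(s * y)) = s⁻¹ * (s * y * exp (-(s * y))) := by field_simp
    _ ≤ s⁻¹ := mul_le_of_le_one_right (inv_nonneg.2 hs.le) h

lemma min_one_div_le_one_add_div_one_add {s t : ℝ} (ht : 0 < t) :
    min 1 (s / t) ≤ (1 + s) / (1 + t) := by
  rw [le_div_iff₀ (by positivity)]
  have h1 := min_le_left 1 (s / t)
  have h2 : min 1 (s / t) * t ≤ s := by
    calc min 1 (s / t) * t ≤ s / t * t := by gcongr; exact min_le_right _ _
      _ = s := div_mul_cancel₀ s ht.ne'
  nlinarith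

noncomputable def expWeight (α u : ℝ) : ℝ := exp (α * u) / (1 + exp u)

lemma continuous_expWeight (α : ℝ) : Continuous (expWeight α) :=
  (by fun_prop : Continuous fun u => exp (α * u)).div (by fun_prop)
    fun u => by positivity

lemma expWeight_nonneg (α u : ℝ) : 0 ≤ expWeight α u := by
  unfold expWeight; positivity

lemma expWeight_le_exp_mul (α u : ℝ) : expWeight α u ≤ exp (α * u) :=
  div_le_self (exp_pos _).le (by linarith [exp_pos u])

lemma expWeight_le_exp_sub_one_mul (α u : ℝ) : expWeight α u ≤ exp ((α - 1) * u) := by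
  rw [expWeight, sub_mul, one_mul, exp_sub]
  exact div_le_div_of_nonneg_left (exp_pos _).le (exp_pos u) (by linarith)

lemma integrable_expWeight {α : ℝ} (hα0 : 0 < α) (hα1 : α < 1) : Integrable (expWeight α) := by
  have hm := (continuous_expWeight α).aestronglyMeasurable (μ := volume)
  rw [← integrableOn_univ, ← Iic_union_Ioi (a := (0 : ℝ))]
  refine IntegrableOn.union ?_ ?_
  · refine (integrableOn_exp_mul_Iic hα0 0).mono' hm.restrict (ae_of_all _ fun u => ?_)
    rw [norm_of_nonneg (expWeight_nonneg α u)]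
    exact expWeight_le_exp_mul α u
  · refine (integrableOn_exp_mul_Ioi (by linarith : α - 1 < 0) 0).mono' hm.restrict
      (ae_of_all _ fun u => ?_)
    rw [norm_of_nonneg (expWeight_nonneg α u)]
    exact expWeight_le_exp_sub_one_mul α u

lemma integrable_of_norm_le_expWeight {α : ℝ} (hα0 : 0 < α) (hα1 : α < 1) {E : Type*}
    [NormedAddCommGroup E] {f : ℝ → E} (hf : AEStronglyMeasurable f) (C : ℝ)
    (h : ∀ u, ‖f u‖ ≤ C * expWeight α u) : Integrable f :=
  ((integrable_expWeight hα0 hα1).const_mul C).mono' hf (ae_of_all _ h)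

lemma norm_exp_mul_smul_le {E : Type*} [SeminormedAddCommGroup E] [NormedSpace ℝ E]
    {α u C : ℝ} {z : E} (hz : ‖z‖ ≤ C / (1 + exp u)) :
    ‖exp (α * u) • z‖ ≤ C * expWeight α u := by
  rw [norm_smul, norm_of_nonneg (exp_pos _).le, expWeight]
  calc exp (α * u) * ‖z‖ ≤ exp (α * u) * (C / (1 + exp u)) := by gcongr
    _ = C * (exp (α * u) / (1 + exp u)) := by ring

lemma integral_exp_mul_mul_exp_neg_mul_exp {a s : ℝ} (ha : 0 < a) (hs : 0 < s) :
    ∫ u, exp (a * u) * exp (-(s * exp u)) = (1 / s) ^ a * Gamma a := by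
  have h := integral_image_eq_integral_abs_deriv_smul MeasurableSet.univ
    (fun u _ => (hasDerivAt_exp u).hasDerivWithinAt) exp_injective.injOn
    (fun t => t ^ (a - 1) * exp (-(s * t)))
  rw [image_univ, range_exp, setIntegral_univ] at h
  rw [← integral_rpow_mul_exp_neg_mul_Ioi ha hs, h]
  congr 1 with u
  rw [abs_of_pos (exp_pos u), smul_eq_mul, ← exp_mul, ← mul_assoc, ← exp_add u,
    show u + u * (a - 1) = a * u by ring]

lemma hasDerivAt_exp_mul_mul_exp_neg_sub_one (α s u : ℝ) :
    HasDerivAt (fun v => exp (α * v) * (exp (-(s * exp (-v))) - 1))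
      (α * (exp (α * u) * (exp (-(s * exp (-u))) - 1))
        + s * (exp (α * u) * (exp (-u) * exp (-(s * exp (-u)))))) u := by
  have h1 : HasDerivAt (fun v => exp (α * v)) (exp (α * u) * α) u := by
    simpa using ((hasDerivAt_id u).const_mul α).exp
  have h2 := (((hasDerivAt_neg u).exp).const_mul s).fun_neg.exp
  exact (h1.fun_mul (h2.sub_const 1)).congr_deriv (by ring)

lemma integrable_exp_mul_mul_exp_neg_sub_one {α s : ℝ} (hα0 : 0 < α) (hα1 : α < 1)
    (hs : 0 ≤ s) : Integrable fun u => exp (α * u) * (exp (-(s * exp (-u))) - 1) := by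
  refine integrable_of_norm_le_expWeight hα0 hα1 (by fun_prop) (1 + s) fun u => ?_
  refine norm_exp_mul_smul_le (E := ℝ) ?_
  rw [norm_eq_abs]
  calc |exp (-(s * exp (-u))) - 1| ≤ min 1 (s / exp u) := by
        rw [div_eq_mul_inv, ← exp_neg]; exact abs_exp_neg_sub_one_le_min (by positivity)
    _ ≤ (1 + s) / (1 + exp u) := min_one_div_le_one_add_div_one_add (exp_pos u)

-- In `t = e^{-u}` this is `∫₀^∞ t^{-α-1} (e^{-st} - 1) dt`; one integration by parts, with no
-- boundary terms, reduces it to Euler's integral for `Γ(1 - α)`.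
lemma integral_exp_mul_mul_exp_neg_sub_one {α s : ℝ} (hα0 : 0 < α) (hα1 : α < 1) (hs : 0 < s) :
    ∫ u, exp (α * u) * (exp (-(s * exp (-u))) - 1) = Gamma (-α) * s ^ α := by
  set F := fun u => exp (α * u) * (exp (-(s * exp (-u))) - 1)
  set G := fun u => exp (α * u) * (exp (-u) * exp (-(s * exp (-u)))) with hG_def
  have hF : Integrable F := integrable_exp_mul_mul_exp_neg_sub_one hα0 hα1 hs.le
  have hG : Integrable G := by
    refine integrable_of_norm_le_expWeight hα0 hα1 (by fun_prop) (1 + s⁻¹) fun u => ?_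
    refine norm_exp_mul_smul_le (E := ℝ) ?_
    rw [norm_of_nonneg (by positivity), le_div_iff₀ (by positivity)]
    have hy := mul_exp_neg_mul_le_inv hs (exp (-u))
    have hb : exp (-(s * exp (-u))) ≤ 1 := exp_le_one_iff.2 (by simp; positivity)
    calc exp (-u) * exp (-(s * exp (-u))) * (1 + exp u)
        = exp (-u) * exp (-(s * exp (-u))) + exp (-(s * exp (-u))) * (exp (-u) * exp u) := by
          ring
      _ ≤ 1 + s⁻¹ := by rw [← exp_add (-u) u, neg_add_cancel, exp_zero]; linarith
  have hG_int : ∫ u, G u = (1 / s) ^ (1 - α) * Gamma (1 - α) := by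
    rw [← integral_neg_eq_self, ← integral_exp_mul_mul_exp_neg_mul_exp (by linarith) hs]
    congr 1 with u
    simp only [hG_def, neg_neg, ← exp_add]
    ring_nf
  have h0 := integral_eq_zero_of_hasDerivAt_of_integrable
    (hasDerivAt_exp_mul_mul_exp_neg_sub_one α s) ((hF.const_mul α).add (hG.const_mul s)) hF
  rw [integral_add (hF.const_mul α) (hG.const_mul s), integral_const_mul, integral_const_mul,
    hG_int] at h0
  have hΓ : Gamma (1 - α) = -α * Gamma (-α) := by
    rw [← Gamma_add_one (neg_ne_zero.2 hα0.ne')]; ring_nf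
  have hpow : s * (1 / s) ^ (1 - α) = s ^ α := by
    rw [div_rpow zero_le_one hs.le, one_rpow, ← div_eq_mul_one_div]
    conv_rhs => rw [show α = 1 - (1 - α) by ring, rpow_sub hs, rpow_one]
  apply mul_left_cancel₀ hα0.ne'
  linear_combination h0 - s * (1 / s) ^ (1 - α) * hΓ + α * Gamma (-α) * hpow

-- `|1 + t e^{iφ}|² = (1 - t)² + 4t cos²(φ/2) ≥ cos²(φ/2) (1 + t)²`.
lemma cos_half_mul_one_add_exp_le_norm (φ u : ℝ) :
    cos (φ / 2) * (1 + exp u) ≤ ‖1 + Complex.exp (u + Complex.I * φ)‖ := by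
  have hcos : cos φ = 2 * cos (φ / 2) ^ 2 - 1 := by rw [← cos_two_mul]; ring_nf
  have hsq : ‖1 + Complex.exp (u + Complex.I * φ)‖ ^ 2
      = (1 - exp u) ^ 2 + 4 * exp u * cos (φ / 2) ^ 2 := by
    rw [Complex.sq_norm, Complex.normSq_apply]
    simp only [Complex.add_re, Complex.add_im, Complex.one_re, Complex.one_im, Complex.exp_re,
      Complex.exp_im, Complex.ofReal_re, Complex.ofReal_im, Complex.mul_re, Complex.mul_im,
      Complex.I_re, Complex.I_im, zero_mul, one_mul, sub_zero, add_zero, zero_add, mul_zero]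
    linear_combination (exp u) ^ 2 * sin_sq_add_cos_sq φ + 2 * exp u * hcos
  refine le_of_sq_le_sq ?_ (norm_nonneg _)
  rw [hsq]
  nlinarith [cos_sq_le_one (φ / 2), sq_nonneg (1 - exp u)]

lemma norm_exp_neg_mul_div_sub_one_le {w : ℂ} {X t c : ℝ} (hX : 0 ≤ X) (hw : ‖w‖ = t)
    (hc : 0 < c) (hD : c * (1 + t) ≤ ‖1 + w‖) :
    ‖(exp (-(X * t)) : ℂ) / (1 + w) - 1‖ ≤ (X + 1) * t / (c * (1 + t)) := by
  have ht : 0 ≤ t := hw ▸ norm_nonneg w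
  have hD0 : 1 + w ≠ 0 := norm_pos_iff.1 (lt_of_lt_of_le (by positivity) hD)
  rw [div_sub_one hD0, norm_div]
  refine div_le_div₀ (by positivity) ?_ (by positivity) hD
  calc ‖(exp (-(X * t)) : ℂ) - (1 + w)‖ = ‖((exp (-(X * t)) - 1 : ℝ) : ℂ) - w‖ := by
        push_cast; ring_nf
    _ ≤ |exp (-(X * t)) - 1| + t := by
        rw [← hw, ← Real.norm_eq_abs, ← Complex.norm_real]; exact norm_sub_le _ _
    _ ≤ X * t + t := by
        gcongr; exact (abs_exp_neg_sub_one_le_min (by positivity)).trans (min_le_right _ _)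
    _ = (X + 1) * t := by ring

lemma norm_exp_neg_mul_div_mul_le {w : ℂ} {X t c : ℝ} (hX : 0 < X) (hw : ‖w‖ = t)
    (hc : 0 < c) (hD : c * (1 + t) ≤ ‖1 + w‖) :
    ‖(exp (-(X * t)) : ℂ) / (1 + w)‖ * t ≤ X⁻¹ / (c * (1 + t)) := by
  have ht : 0 ≤ t := hw ▸ norm_nonneg w
  rw [norm_div, Complex.norm_real, norm_of_nonneg (exp_pos _).le, div_mul_eq_mul_div, mul_comm]
  exact div_le_div₀ (by positivity) (mul_exp_neg_mul_le_inv hX t) (by positivity) hD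

lemma norm_mul_mul_sub_sub_le (q : ℂ) (a b : ℝ) :
    ‖q * a * b - q - (b - 1)‖ ≤ |b - 1| * ‖q - 1‖ + ‖q‖ * |b| * |a - 1| := by
  have h : q * a * b - q - (b - 1) = ((b - 1 : ℝ) : ℂ) * (q - 1) + q * b * ((a - 1 : ℝ) : ℂ) := by
    push_cast; ring
  rw [h]
  refine (norm_add_le _ _).trans_eq ?_
  simp only [norm_mul, Complex.norm_real, Real.norm_eq_abs]

noncomputable def integrand (X α φ ε u : ℝ) : ℂ :=
  (Real.exp (-(X * Real.exp u) - 2 * ε * X * Real.cosh u) : ℂ) *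
    Complex.exp ((α : ℂ) * (u : ℂ)) / (1 + Complex.exp ((u : ℂ) + Complex.I * (φ : ℂ)))

lemma integrand_eq_smul (X α φ ε u : ℝ) :
    integrand X α φ ε u = exp (α * u) •
      ((exp (-(X * exp u) - 2 * ε * X * cosh u) : ℂ) / (1 + Complex.exp (u + Complex.I * φ))) := by
  rw [integrand, Complex.real_smul, Complex.ofReal_exp]
  push_cast
  ring

lemma one_add_exp_ne_zero {φ : ℝ} (hc : 0 < cos (φ / 2)) (u : ℝ) :
    1 + Complex.exp (u + Complex.I * φ) ≠ 0 :=
  norm_pos_iff.1 <| lt_of_lt_of_le (by positivity) (cos_half_mul_one_add_exp_le_norm φ u)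

lemma norm_integrand_le {X ε φ : ℝ} (hX : 0 ≤ X) (hε : 0 ≤ ε) (hc : 0 < cos (φ / 2))
    (α u : ℝ) : ‖integrand X α φ ε u‖ ≤ (cos (φ / 2))⁻¹ * expWeight α u := by
  rw [integrand_eq_smul]
  refine norm_exp_mul_smul_le ?_
  rw [norm_div, Complex.norm_real, norm_of_nonneg (exp_pos _).le]
  have hexp : exp (-(X * exp u) - 2 * ε * X * cosh u) ≤ 1 :=
    exp_le_one_iff.2 (by nlinarith [exp_pos u, cosh_pos u, mul_nonneg hε hX])
  calc exp (-(X * exp u) - 2 * ε * X * cosh u) / ‖1 + Complex.exp (u + Complex.I * φ)‖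
      ≤ 1 / (cos (φ / 2) * (1 + exp u)) :=
        div_le_div₀ zero_le_one hexp (by positivity) (cos_half_mul_one_add_exp_le_norm φ u)
    _ = (cos (φ / 2))⁻¹ / (1 + exp u) := by rw [one_div, mul_inv, ← div_eq_mul_inv]

lemma integrable_integrand {X α φ ε : ℝ} (hX : 0 ≤ X) (hα0 : 0 < α) (hα1 : α < 1)
    (hε : 0 ≤ ε) (hc : 0 < cos (φ / 2)) : Integrable (integrand X α φ ε) := by
  refine integrable_of_norm_le_expWeight hα0 hα1 ?_ _ (norm_integrand_le hX hε hc α)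
  exact (Continuous.div (by fun_prop) (by fun_prop) (one_add_exp_ne_zero hc)).aestronglyMeasurable

lemma norm_integrand_sub_integrand_zero_sub_le {X ε φ : ℝ} (hX : 0 < X) (hε : 0 ≤ ε)
    (hc : 0 < cos (φ / 2)) (α u : ℝ) :
    ‖integrand X α φ ε u - integrand X α φ 0 u
        - ((exp (α * u) * (exp (-(ε * X * exp (-u))) - 1) : ℝ) : ℂ)‖
      ≤ (X * (X + 1) + 1) / cos (φ / 2) * ε * expWeight α u := by
  set t := exp u with ht_def
  set c := cos (φ / 2)
  set w := Complex.exp (u + Complex.I * φ)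
  set q : ℂ := (exp (-(X * t)) : ℂ) / (1 + w) with hq
  set a := exp (-(ε * X * t))
  set b := exp (-(ε * X * exp (-u)))
  have ht : 0 < t := exp_pos u
  have hw : ‖w‖ = t := by simp [w, t, Complex.norm_exp]
  have hD : c * (1 + t) ≤ ‖1 + w‖ := cos_half_mul_one_add_exp_le_norm φ u
  have hsplit : integrand X α φ ε u - integrand X α φ 0 u - ((exp (α * u) * (b - 1) : ℝ) : ℂ)
      = exp (α * u) • (q * a * b - q - (b - 1)) := by
    have hε_exp : exp (-(X * t) - 2 * ε * X * cosh u) = exp (-(X * t)) * a * b := by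
      rw [← exp_add, ← exp_add, cosh_eq, ← ht_def]; ring_nf
    rw [integrand_eq_smul, integrand_eq_smul, hε_exp, mul_zero, zero_mul, zero_mul, sub_zero,
      Complex.real_smul, Complex.real_smul, Complex.real_smul, hq]
    simp only [Complex.ofReal_mul, Complex.ofReal_sub, Complex.ofReal_one]
    ring
  rw [hsplit]
  refine norm_exp_mul_smul_le ?_
  have hb : |b - 1| ≤ ε * X * t⁻¹ := by
    rw [ht_def, ← exp_neg]
    exact (abs_exp_neg_sub_one_le_min (by positivity)).trans (min_le_right _ _)
  have ha : |a - 1| ≤ ε * X * t :=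
    (abs_exp_neg_sub_one_le_min (by positivity)).trans (min_le_right _ _)
  have hb1 : |b| ≤ 1 := by
    rw [abs_of_pos (exp_pos _)]; exact exp_le_one_iff.2 (by simp; positivity)
  have hq1 := norm_exp_neg_mul_div_sub_one_le hX.le hw hc hD
  have hqt := norm_exp_neg_mul_div_mul_le hX hw hc hD
  calc ‖q * a * b - q - (b - 1)‖ ≤ |b - 1| * ‖q - 1‖ + ‖q‖ * |b| * |a - 1| :=
        norm_mul_mul_sub_sub_le q a b
    _ ≤ ε * X * t⁻¹ * ((X + 1) * t / (c * (1 + t))) + ‖q‖ * 1 * (ε * X * t) := by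
        gcongr
    _ = ε * X * (X + 1) / (c * (1 + t)) + ε * X * (‖q‖ * t) := by
        field_simp
    _ ≤ ε * X * (X + 1) / (c * (1 + t)) + ε * X * (X⁻¹ / (c * (1 + t))) := by
        gcongr
    _ = (X * (X + 1) + 1) / c * ε / (1 + t) := by
        field_simp

lemma integrand_zero (X α φ u : ℝ) :
    integrand X α φ 0 u = (Real.exp (-(X * Real.exp u)) : ℂ) *
      Complex.exp ((α : ℂ) * (u : ℂ)) / (1 + Complex.exp ((u : ℂ) + Complex.I * (φ : ℂ))) := by
  simp [integrand]

lemma norm_integral_integrand_sub_sub_le {X α φ ε : ℝ} (hX : 0 < X) (hα0 : 0 < α) (hα1 : α < 1)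
    (hε : 0 < ε) (hc : 0 < cos (φ / 2)) :
    ‖(∫ u, integrand X α φ ε u) - (∫ u, integrand X α φ 0 u)
        - ((Gamma (-α) * X ^ α * ε ^ α : ℝ) : ℂ)‖
      ≤ (X * (X + 1) + 1) / cos (φ / 2) * (∫ u, expWeight α u) * ε := by
  have hmain : ∫ u, ((exp (α * u) * (exp (-(ε * X * exp (-u))) - 1) : ℝ) : ℂ)
      = ((Gamma (-α) * X ^ α * ε ^ α : ℝ) : ℂ) := by
    rw [integral_complex_ofReal, integral_exp_mul_mul_exp_neg_sub_one hα0 hα1 (by positivity),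
      mul_rpow hε.le hX.le, mul_comm (ε ^ α), mul_assoc]
  have hint := fun δ (hδ : 0 ≤ δ) => integrable_integrand hX.le hα0 hα1 hδ hc
  have hdiff : Integrable fun u => integrand X α φ ε u - integrand X α φ 0 u :=
    (hint ε hε.le).sub (hint 0 le_rfl)
  have hmain_int :
      Integrable fun u => ((exp (α * u) * (exp (-(ε * X * exp (-u))) - 1) : ℝ) : ℂ) :=
    (integrable_exp_mul_mul_exp_neg_sub_one hα0 hα1 (by positivity)).ofReal
  rw [← hmain, ← integral_sub (hint ε hε.le) (hint 0 le_rfl), ← integral_sub hdiff hmain_int]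
  calc _ ≤ ∫ u, (X * (X + 1) + 1) / cos (φ / 2) * ε * expWeight α u :=
        norm_integral_le_of_norm_le ((integrable_expWeight hα0 hα1).const_mul _)
          (ae_of_all _ (norm_integrand_sub_integrand_zero_sub_le hX hε.le hc α))
    _ = _ := by rw [integral_const_mul]; ring

end AsymptSingle

/-- Step 1 of Appendix B, second part: for `X > 0`, `0 < α < 1` and
`φ ∈ (−π,π)`, as `ε → 0+`,
`∫_ℝ exp(−Xe^u − 2εX cosh u) e^{αu}/(1+e^{u+iφ}) du
  = ∫_ℝ exp(−Xe^u) e^{αu}/(1+e^{u+iφ}) du + Γ(−α) X^α ε^α + O(ε)`. -/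
theorem asympt_single (X : ℝ) (hX : 0 < X) (α : ℝ) (hα0 : 0 < α) (hα1 : α < 1)
    (φ : ℝ) (hφ : φ ∈ Set.Ioo (-Real.pi) Real.pi) :
    ∃ C ε₀ : ℝ, 0 < ε₀ ∧ ∀ ε : ℝ, 0 < ε → ε ≤ ε₀ →
      ‖(∫ u : ℝ, (Real.exp (-(X * Real.exp u) - 2 * ε * X * Real.cosh u) : ℂ) *
            Complex.exp ((α : ℂ) * (u : ℂ)) /
              (1 + Complex.exp ((u : ℂ) + Complex.I * (φ : ℂ))))
          - (∫ u : ℝ, (Real.exp (-(X * Real.exp u)) : ℂ) *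
              Complex.exp ((α : ℂ) * (u : ℂ)) /
                (1 + Complex.exp ((u : ℂ) + Complex.I * (φ : ℂ))))
          - ((Real.Gamma (-α) * X ^ α * ε ^ α : ℝ) : ℂ)‖ ≤ C * ε := by
  have hc : 0 < Real.cos (φ / 2) :=
    Real.cos_pos_of_mem_Ioo ⟨by linarith [hφ.1], by linarith [hφ.2]⟩
  refine ⟨(X * (X + 1) + 1) / Real.cos (φ / 2) * ∫ u, AsymptSingle.expWeight α u, 1, one_pos,
    fun ε hε _ => ?_⟩
  simp_rw [← AsymptSingle.integrand_zero]
  exact AsymptSingle.norm_integral_integrand_sub_sub_le hX hα0 hα1 hε hc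
end

section
/- Let ε, σ, ν, a, b > 0 with σ ≠ ν and with neither σ nor ν a positive integer. Then ∫_{a}^{∞}∫_{b}^{∞} e^{−ε t₁ t₂} t₁^{−1−σ} t₂^{−1−ν} dt₁ dt₂ = (1/(σ − ν)) ( a^{−σ+ν} Γ(−ν) ε^{ν} − b^{σ−ν} Γ(−σ) ε^{σ} ) + a^{−σ} b^{−ν} ∑_{k=0}^{∞} (−1)^{k} (abε)^{k} / (k! (k − σ)(k − ν)), the series on the right being absolutely convergent. -/
/-!
The inner integral is a rescaled upper incomplete gamma function,
`∫_b^∞ e^{-x t} t^{-1-ν} dt = x^ν Γ(-ν, x b)`, and integrating by parts in the outer variable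
expresses `∫_a^∞ t^{ν-σ-1} Γ(-ν, εbt) dt` through `Γ(-ν, A)` and `Γ(-σ, A)`, where `A = abε`.
For `s > 0`, integrating the exponential series termwise gives
`Γ(s, x) = Γ(s) - x^s ∑ (-1)^k x^k / (k! (s + k))`; both sides satisfy the recurrence
`Γ(s + 1, x) = s Γ(s, x) + e^{-x} x^s`, which carries the identity down to every `s` that is not
a non-positive integer. The partial fractions
`1 / ((k - σ)(k - ν)) = (1 / (k - σ) - 1 / (k - ν)) / (σ - ν)` merge the two resulting series.
-/

open MeasureTheory Set Real Filter Topology Asymptotics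
open scoped Nat

noncomputable def lowerGammaSeries (s x : ℝ) : ℝ :=
  ∑' k : ℕ, (-1) ^ k * x ^ k / (k ! * (s + k))

lemma summable_pow_div_factorial_mul (x : ℝ) {d : ℕ → ℝ} (hd : ∀ᶠ k in atTop, 1 ≤ d k) :
    Summable fun k : ℕ => x ^ k / (k ! * d k) := by
  refine (Real.summable_pow_div_factorial |x|).of_norm_bounded_eventually_nat ?_
  filter_upwards [hd] with k hk
  rw [norm_div, norm_pow, norm_mul, Real.norm_eq_abs, Real.norm_eq_abs, Real.norm_eq_abs,
    Nat.abs_cast, abs_of_pos (by linarith : 0 < d k)]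
  exact div_le_div_of_nonneg_left (by positivity) (by positivity)
    (le_mul_of_one_le_right (by positivity) hk)

lemma eventually_one_le_add_natCast (s : ℝ) : ∀ᶠ k : ℕ in atTop, 1 ≤ s + k := by
  filter_upwards [eventually_ge_atTop ⌈1 - s⌉₊] with k hk
  linarith [Nat.ceil_le.mp hk]

lemma summable_lowerGammaSeries (s x : ℝ) :
    Summable fun k : ℕ => (-1) ^ k * x ^ k / (k ! * (s + k)) :=
  (summable_pow_div_factorial_mul (-x) (eventually_one_le_add_natCast s)).congr fun k => by
    rw [neg_pow x]

lemma hasSum_neg_one_pow_mul_pow_div_factorial (x : ℝ) :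
    HasSum (fun k : ℕ => (-1) ^ k * x ^ k / k !) (exp (-x)) := by
  rw [Real.exp_eq_exp_ℝ]
  exact (NormedSpace.expSeries_div_hasSum_exp (-x)).congr_fun fun k => by rw [neg_pow x]

lemma mul_lowerGammaSeries (x : ℝ) {s : ℝ} (hs : ∀ m : ℕ, s ≠ -m) :
    s * lowerGammaSeries s x = x * lowerGammaSeries (s + 1) x + exp (-x) := by
  have hsk (k : ℕ) : s + k ≠ 0 := fun h => hs k (by linarith)
  have hshift : HasSum (fun k : ℕ => k * ((-1) ^ k * x ^ k / (k ! * (s + k))))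
      (-(x * lowerGammaSeries (s + 1) x)) := by
    rw [← hasSum_nat_add_iff' 1]
    simp only [Finset.range_one, Finset.sum_singleton, CharP.cast_eq_zero, zero_mul, sub_zero]
    rw [← neg_mul, lowerGammaSeries, ← tsum_mul_left]
    refine ((summable_lowerGammaSeries (s + 1) x).mul_left (-x)).hasSum.congr_fun fun k => ?_
    have h₁ : s + (k + 1) ≠ 0 := by exact_mod_cast hsk (k + 1)
    have h₂ : s + 1 + k ≠ 0 := by rwa [add_right_comm, add_assoc]
    rw [Nat.factorial_succ]
    push_cast
    field_simp
    ring
  have hsplit : HasSum (fun k : ℕ => s * ((-1) ^ k * x ^ k / (k ! * (s + k))))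
      (exp (-x) - -(x * lowerGammaSeries (s + 1) x)) := by
    refine ((hasSum_neg_one_pow_mul_pow_div_factorial x).sub hshift).congr_fun fun k => ?_
    have := hsk k
    field_simp
    ring
  rw [lowerGammaSeries, ← tsum_mul_left, hsplit.tsum_eq]
  ring

lemma summable_neg_one_pow_mul_pow_div_factorial_mul_sub_mul_sub (σ ν x : ℝ) :
    Summable fun k : ℕ => (-1) ^ k * x ^ k / (k ! * (k - σ) * (k - ν)) := by
  have hd : ∀ᶠ k : ℕ in atTop, 1 ≤ ((k : ℝ) - σ) * (k - ν) := by
    filter_upwards [eventually_one_le_add_natCast (-σ), eventually_one_le_add_natCast (-ν)]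
      with k hσ hν
    exact one_le_mul_of_one_le_of_one_le (by linarith) (by linarith)
  exact (summable_pow_div_factorial_mul (-x) hd).congr fun k => by rw [neg_pow x, mul_assoc]

lemma lowerGammaSeries_neg_sub_lowerGammaSeries_neg {σ ν : ℝ} (hσ : ∀ k : ℕ, (k : ℝ) ≠ σ)
    (hν : ∀ k : ℕ, (k : ℝ) ≠ ν) (x : ℝ) :
    lowerGammaSeries (-σ) x - lowerGammaSeries (-ν) x =
      (σ - ν) * ∑' k : ℕ, (-1) ^ k * x ^ k / (k ! * (k - σ) * (k - ν)) := by
  rw [lowerGammaSeries, lowerGammaSeries, ← Summable.tsum_sub (summable_lowerGammaSeries _ x)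
    (summable_lowerGammaSeries _ x), ← tsum_mul_left]
  refine tsum_congr fun k => ?_
  have hkσ : -σ + k ≠ 0 := fun h => hσ k (by linarith)
  have hkν : -ν + k ≠ 0 := fun h => hν k (by linarith)
  have hkσ' : (k : ℝ) - σ ≠ 0 := sub_ne_zero.mpr (hσ k)
  have hkν' : (k : ℝ) - ν ≠ 0 := sub_ne_zero.mpr (hν k)
  field_simp
  ring

noncomputable def upperIncompleteGamma (s x : ℝ) : ℝ :=
  ∫ u in Ioi x, exp (-u) * u ^ (s - 1)

lemma continuousOn_exp_neg_mul_rpow (s : ℝ) :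
    ContinuousOn (fun u => exp (-u) * u ^ (s - 1)) (Ioi 0) :=
  (continuous_exp.comp continuous_neg).continuousOn.mul
    (continuousOn_id.rpow_const fun _ hu => Or.inl (ne_of_gt hu))

lemma integrableOn_exp_neg_mul_rpow_Ioi (s : ℝ) {x : ℝ} (hx : 0 < x) :
    IntegrableOn (fun u => exp (-u) * u ^ (s - 1)) (Ioi x) := by
  refine integrable_of_isBigO_exp_neg one_half_pos
    ((continuousOn_exp_neg_mul_rpow s).mono fun _ hu => hx.trans_le hu) ?_
  refine ((isBigO_refl (fun u => exp (-u)) atTop).mul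
    (isLittleO_rpow_exp_pos_mul_atTop (s - 1) one_half_pos).isBigO).congr_right fun u => ?_
  rw [← exp_add]
  ring_nf

lemma upperIncompleteGamma_nonneg (s : ℝ) {x : ℝ} (hx : 0 ≤ x) : 0 ≤ upperIncompleteGamma s x :=
  setIntegral_nonneg measurableSet_Ioi fun _ hu =>
    mul_nonneg (exp_pos _).le (rpow_nonneg (hx.trans (le_of_lt hu)) _)

lemma upperIncompleteGamma_le_rpow_mul_exp_neg {s : ℝ} (hs : s ≤ 1) {x : ℝ} (hx : 0 < x) :
    upperIncompleteGamma s x ≤ x ^ (s - 1) * exp (-x) := by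
  calc upperIncompleteGamma s x ≤ ∫ u in Ioi x, x ^ (s - 1) * exp (-u) := by
        refine setIntegral_mono_on (integrableOn_exp_neg_mul_rpow_Ioi s hx)
          ((integrableOn_exp_neg_Ioi x).const_mul _) measurableSet_Ioi fun u hu => ?_
        rw [mul_comm]
        exact mul_le_mul_of_nonneg_right
          (rpow_le_rpow_of_nonpos hx (le_of_lt hu) (by linarith)) (exp_pos _).le
    _ = x ^ (s - 1) * exp (-x) := by rw [integral_const_mul, integral_exp_neg_Ioi]

lemma hasDerivAt_upperIncompleteGamma (s : ℝ) {x : ℝ} (hx : 0 < x) :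
    HasDerivAt (upperIncompleteGamma s) (-(exp (-x) * x ^ (s - 1))) x := by
  have hc : 0 < x / 2 := by positivity
  have hcont := continuousOn_exp_neg_mul_rpow s
  have hFTC : HasDerivAt (fun y => ∫ u in x / 2..y, exp (-u) * u ^ (s - 1))
      (exp (-x) * x ^ (s - 1)) x :=
    intervalIntegral.integral_hasDerivAt_right
      (hcont.mono fun u hu => hc.trans_le (by simpa [hc.le, hx.le] using hu.1)).intervalIntegrable
      (hcont.stronglyMeasurableAtFilter isOpen_Ioi x hx) (hcont.continuousAt (Ioi_mem_nhds hx))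
  refine ((hasDerivAt_const x (upperIncompleteGamma s (x / 2))).sub hFTC |>.congr_deriv
    (zero_sub _)).congr_of_eventuallyEq ?_
  filter_upwards [Ioi_mem_nhds (by linarith : x / 2 < x)] with y hy
  rw [Pi.sub_apply,
    ← intervalIntegral.integral_Ioi_sub_Ioi (integrableOn_exp_neg_mul_rpow_Ioi s hc) hy.out.le]
  simp only [upperIncompleteGamma, sub_sub_cancel]

lemma upperIncompleteGamma_add_one (s : ℝ) {x : ℝ} (hx : 0 < x) :
    upperIncompleteGamma (s + 1) x = s * upperIncompleteGamma s x + exp (-x) * x ^ s := by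
  have hderiv : ∀ u ∈ Ici x, HasDerivAt (fun u => -(exp (-u) * u ^ s))
      (exp (-u) * u ^ (s + 1 - 1) - s * (exp (-u) * u ^ (s - 1))) u := by
    intro u hu
    refine ((hasDerivAt_neg u).exp.mul
      (hasDerivAt_rpow_const (p := s) (Or.inl (hx.trans_le hu).ne'))).neg.congr_deriv ?_
    rw [add_sub_cancel_right]
    ring
  have hlim : Tendsto (fun u => -(exp (-u) * u ^ s)) atTop (𝓝 0) := by
    simpa [mul_comm] using (tendsto_rpow_mul_exp_neg_mul_atTop_nhds_zero s 1 one_pos).neg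
  have hint := integrableOn_exp_neg_mul_rpow_Ioi s hx
  have hFTC := integral_Ioi_of_hasDerivAt_of_tendsto' hderiv
    ((integrableOn_exp_neg_mul_rpow_Ioi (s + 1) hx).sub (hint.const_mul s)) hlim
  rw [integral_sub (integrableOn_exp_neg_mul_rpow_Ioi (s + 1) hx) (hint.const_mul s),
    integral_const_mul] at hFTC
  rw [upperIncompleteGamma, upperIncompleteGamma]
  linarith

lemma integral_Ioc_rpow_add_natCast {s : ℝ} (hs : 0 < s) {x : ℝ} (hx : 0 ≤ x) (k : ℕ) :
    ∫ u in Ioc 0 x, u ^ (s - 1 + k) = x ^ s * (x ^ k / (s + k)) := by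
  have hsk : 0 < s + k := by positivity
  rw [← intervalIntegral.integral_of_le hx, integral_rpow (Or.inl (by linarith)),
    show s - 1 + k + 1 = s + k by ring, zero_rpow hsk.ne', sub_zero,
    rpow_add_natCast' hx hsk.ne', mul_div_assoc]

lemma integral_Ioc_exp_neg_mul_rpow {s : ℝ} (hs : 0 < s) {x : ℝ} (hx : 0 ≤ x) :
    ∫ u in Ioc 0 x, exp (-u) * u ^ (s - 1) = x ^ s * lowerGammaSeries s x := by
  set F : ℕ → ℝ → ℝ := fun k u => (-1) ^ k / k ! * u ^ (s - 1 + k)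
  have hF_int (k : ℕ) : Integrable (F k) (volume.restrict (Ioc 0 x)) :=
    (intervalIntegral.intervalIntegrable_rpow' (by linarith [k.cast_nonneg (α := ℝ)])).1.const_mul _
  have hF_norm (k : ℕ) : ∫ u in Ioc 0 x, ‖F k u‖ = x ^ s * (x ^ k / (k ! * (s + k))) := by
    rw [setIntegral_congr_fun measurableSet_Ioc (g := fun u => (k ! : ℝ)⁻¹ * u ^ (s - 1 + k))
      fun u hu => by simp [F, abs_of_nonneg (rpow_nonneg hu.1.le _)],
      integral_const_mul, integral_Ioc_rpow_add_natCast hs hx]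
    field_simp
  have hF_summable : Summable fun k => ∫ u in Ioc 0 x, ‖F k u‖ := by
    simpa only [hF_norm] using
      (summable_pow_div_factorial_mul x (eventually_one_le_add_natCast s)).mul_left (x ^ s)
  have hF_sum (u : ℝ) (hu : u ∈ Ioc 0 x) : HasSum (fun k => F k u) (exp (-u) * u ^ (s - 1)) := by
    rw [mul_comm]
    refine ((hasSum_neg_one_pow_mul_pow_div_factorial u).mul_left _).congr_fun fun k => ?_
    show (-1) ^ k / k ! * u ^ (s - 1 + k) = _
    rw [rpow_add_natCast hu.1.ne']
    ring
  rw [setIntegral_congr_fun measurableSet_Ioc fun u hu => (hF_sum u hu).tsum_eq.symm,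
    ← (hasSum_integral_of_summable_integral_norm hF_int hF_summable).tsum_eq, lowerGammaSeries,
    ← tsum_mul_left]
  refine tsum_congr fun k => ?_
  rw [integral_const_mul, integral_Ioc_rpow_add_natCast hs hx]
  field_simp

lemma upperIncompleteGamma_eq_Gamma_sub_of_pos {s : ℝ} (hs : 0 < s) {x : ℝ} (hx : 0 < x) :
    upperIncompleteGamma s x = Gamma s - x ^ s * lowerGammaSeries s x := by
  rw [← integral_Ioc_exp_neg_mul_rpow hs hx.le, ← intervalIntegral.integral_of_le hx.le,
    ← intervalIntegral.integral_Ioi_sub_Ioi (GammaIntegral_convergent hs) hx.le,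
    Gamma_eq_integral hs, upperIncompleteGamma, sub_sub_cancel]

theorem upperIncompleteGamma_eq_Gamma_sub {s : ℝ} (hs : ∀ m : ℕ, s ≠ -m) {x : ℝ} (hx : 0 < x) :
    upperIncompleteGamma s x = Gamma s - x ^ s * lowerGammaSeries s x := by
  obtain ⟨n, hn⟩ := exists_nat_gt (-s)
  induction n generalizing s with
  | zero => exact upperIncompleteGamma_eq_Gamma_sub_of_pos (by simpa using hn) hx
  | succ n ih =>
    rcases lt_or_ge 0 s with hpos | _
    · exact upperIncompleteGamma_eq_Gamma_sub_of_pos hpos hx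
    have hs0 : s ≠ 0 := by simpa using hs 0
    have hs1 : ∀ m : ℕ, s + 1 ≠ -m := fun m h => hs (m + 1) (by push_cast; linarith)
    have hrec := upperIncompleteGamma_add_one s hx
    rw [ih hs1 (by push_cast at hn; linarith), Gamma_add_one hs0, rpow_add_one hx.ne'] at hrec
    apply mul_left_cancel₀ hs0
    linear_combination -hrec + x ^ s * mul_lowerGammaSeries x hs

lemma integral_exp_neg_mul_mul_rpow_Ioi (p : ℝ) {x c : ℝ} (hx : 0 < x) (hc : 0 < c) :
    ∫ t in Ioi c, exp (-(x * t)) * t ^ (-1 - p) = x ^ p * upperIncompleteGamma (-p) (x * c) := by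
  have hxp : x ^ (p + 1) * x ^ (-p - 1) = 1 := by rw [← rpow_add hx]; norm_num
  have hsubst := integral_comp_mul_left_Ioi (fun u => exp (-u) * u ^ (-p - 1)) c hx
  simp only [smul_eq_mul] at hsubst
  rw [setIntegral_congr_fun measurableSet_Ioi (g := fun t =>
      x ^ (p + 1) * (exp (-(x * t)) * (x * t) ^ (-p - 1))) fun t ht => ?_,
    integral_const_mul, hsubst, upperIncompleteGamma, ← mul_assoc, rpow_add_one hx.ne',
    mul_assoc (x ^ p), mul_inv_cancel₀ hx.ne', mul_one]
  beta_reduce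
  rw [mul_rpow hx.le (hc.trans ht).le, show -1 - p = -p - 1 by ring]
  linear_combination (-(exp (-(x * t)) * t ^ (-p - 1))) * hxp

lemma rpow_mul_upperIncompleteGamma_le (a : ℝ) {s : ℝ} (hs : s ≤ 1) {u : ℝ} (hu : 0 < u) :
    u ^ a * upperIncompleteGamma s u ≤ exp (-u) * u ^ (a + s - 1) := by
  calc u ^ a * upperIncompleteGamma s u ≤ u ^ a * (u ^ (s - 1) * exp (-u)) :=
        mul_le_mul_of_nonneg_left (upperIncompleteGamma_le_rpow_mul_exp_neg hs hu)
          (rpow_nonneg hu.le _)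
    _ = exp (-u) * u ^ (a + s - 1) := by rw [add_sub_assoc, rpow_add hu]; ring

lemma integrableOn_rpow_mul_upperIncompleteGamma_Ioi (a : ℝ) {s : ℝ} (hs : s ≤ 1) {A : ℝ}
    (hA : 0 < A) : IntegrableOn (fun u => u ^ a * upperIncompleteGamma s u) (Ioi A) := by
  have hcont : ContinuousOn (fun u => u ^ a * upperIncompleteGamma s u) (Ioi A) := fun u hu =>
    ((continuousAt_rpow_const _ _ (Or.inl (hA.trans hu).ne')).mul
      (hasDerivAt_upperIncompleteGamma s (hA.trans hu)).continuousAt).continuousWithinAt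
  refine Integrable.mono' (integrableOn_exp_neg_mul_rpow_Ioi (a + s) hA)
    (hcont.aestronglyMeasurable measurableSet_Ioi) ?_
  filter_upwards [ae_restrict_mem measurableSet_Ioi] with u hu
  have hu0 : 0 < u := hA.trans hu
  rw [norm_of_nonneg (mul_nonneg (rpow_nonneg hu0.le _) (upperIncompleteGamma_nonneg s hu0.le))]
  exact rpow_mul_upperIncompleteGamma_le a hs hu0

lemma tendsto_rpow_mul_upperIncompleteGamma_atTop (a : ℝ) {s : ℝ} (hs : s ≤ 1) :
    Tendsto (fun u => u ^ a * upperIncompleteGamma s u) atTop (𝓝 0) := by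
  refine tendsto_of_tendsto_of_tendsto_of_le_of_le' tendsto_const_nhds
    (tendsto_rpow_mul_exp_neg_mul_atTop_nhds_zero (a + s - 1) 1 one_pos) ?_ ?_
  · filter_upwards [eventually_gt_atTop 0] with u hu
    exact mul_nonneg (rpow_nonneg hu.le _) (upperIncompleteGamma_nonneg s hu.le)
  · filter_upwards [eventually_gt_atTop 0] with u hu
    rw [neg_one_mul, mul_comm _ (exp _)]
    exact rpow_mul_upperIncompleteGamma_le a hs hu

theorem integral_rpow_mul_upperIncompleteGamma_Ioi {r s : ℝ} (hr : r ≠ 0) (hs : s ≤ 1) {A : ℝ}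
    (hA : 0 < A) :
    ∫ u in Ioi A, u ^ (r - 1) * upperIncompleteGamma s u =
      (upperIncompleteGamma (r + s) A - A ^ r * upperIncompleteGamma s A) / r := by
  have hderiv : ∀ u ∈ Ici A, HasDerivAt (fun u => u ^ r * upperIncompleteGamma s u)
      (r * (u ^ (r - 1) * upperIncompleteGamma s u) - exp (-u) * u ^ (r + s - 1)) u := by
    intro u hu
    have hu0 : 0 < u := hA.trans_le hu
    refine ((hasDerivAt_rpow_const (Or.inl hu0.ne')).mul
      (hasDerivAt_upperIncompleteGamma s hu0)).congr_deriv ?_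
    rw [add_sub_assoc, rpow_add hu0]
    ring
  have hint := (integrableOn_rpow_mul_upperIncompleteGamma_Ioi (r - 1) hs hA).const_mul r
  have hint' := integrableOn_exp_neg_mul_rpow_Ioi (r + s) hA
  have hFTC := integral_Ioi_of_hasDerivAt_of_tendsto' hderiv (hint.sub hint')
    (tendsto_rpow_mul_upperIncompleteGamma_atTop r hs)
  rw [integral_sub hint hint', integral_const_mul] at hFTC
  rw [eq_div_iff hr, upperIncompleteGamma]
  linarith

lemma integral_rpow_mul_upperIncompleteGamma_mul_Ioi {r s : ℝ} (hr : r ≠ 0) (hs : s ≤ 1) {c a : ℝ}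
    (hc : 0 < c) (ha : 0 < a) :
    ∫ t in Ioi a, t ^ (r - 1) * upperIncompleteGamma s (c * t) =
      (c ^ (-r) * upperIncompleteGamma (r + s) (c * a) -
        a ^ r * upperIncompleteGamma s (c * a)) / r := by
  have hsubst := integral_comp_mul_left_Ioi (fun u => u ^ (r - 1) * upperIncompleteGamma s u) a hc
  simp only [smul_eq_mul] at hsubst
  have hscale : ∀ t ∈ Ioi a, t ^ (r - 1) * upperIncompleteGamma s (c * t) =
      c ^ (-r) * c * ((c * t) ^ (r - 1) * upperIncompleteGamma s (c * t)) := by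
    intro t ht
    rw [mul_rpow hc.le (ha.trans ht).le]
    have hc' : c ^ (-r) * c * c ^ (r - 1) = 1 := by
      rw [← rpow_add_one hc.ne', ← rpow_add hc]
      norm_num
    linear_combination (-(t ^ (r - 1) * upperIncompleteGamma s (c * t))) * hc'
  rw [setIntegral_congr_fun measurableSet_Ioi hscale, integral_const_mul, hsubst,
    integral_rpow_mul_upperIncompleteGamma_Ioi hr hs (by positivity), mul_rpow hc.le ha.le,
    rpow_neg hc.le]
  have : c ^ r ≠ 0 := (rpow_pos_of_pos hc r).ne'
  field_simp

theorem integral_integral_exp_neg_mul_mul_rpow_Ioi {ε σ ν a b : ℝ} (hε : 0 < ε) (hν : -1 ≤ ν)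
    (ha : 0 < a) (hb : 0 < b) (hσν : σ ≠ ν) :
    ∫ t₁ in Ioi a, ∫ t₂ in Ioi b, exp (-(ε * t₁ * t₂)) * t₁ ^ (-1 - σ) * t₂ ^ (-1 - ν) =
      (a ^ (ν - σ) * ε ^ ν * upperIncompleteGamma (-ν) (a * b * ε) -
        b ^ (σ - ν) * ε ^ σ * upperIncompleteGamma (-σ) (a * b * ε)) / (σ - ν) := by
  have hinner : ∀ t ∈ Ioi a,
      ∫ t₂ in Ioi b, exp (-(ε * t * t₂)) * t ^ (-1 - σ) * t₂ ^ (-1 - ν) =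
        ε ^ ν * (t ^ (ν - σ - 1) * upperIncompleteGamma (-ν) (ε * b * t)) := by
    intro t ht
    have ht0 : 0 < t := ha.trans ht
    simp_rw [mul_right_comm _ (t ^ (-1 - σ))]
    rw [integral_mul_const, integral_exp_neg_mul_mul_rpow_Ioi ν (by positivity) hb,
      mul_rpow hε.le ht0.le, mul_right_comm ε t b, show ν - σ - 1 = ν + (-1 - σ) by ring,
      rpow_add ht0]
    ring
  have hr : ν - σ ≠ 0 := sub_ne_zero.mpr hσν.symm
  rw [setIntegral_congr_fun measurableSet_Ioi hinner, integral_const_mul,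
    integral_rpow_mul_upperIncompleteGamma_mul_Ioi hr (by linarith) (by positivity) ha,
    show ν - σ + -ν = -σ by ring, show ε * b * a = a * b * ε by ring]
  have hrpow : ε ^ ν * (ε * b) ^ (-(ν - σ)) = b ^ (σ - ν) * ε ^ σ := by
    rw [mul_rpow hε.le hb.le]
    simp only [rpow_def_of_pos, hb, hε, ← exp_add]
    ring_nf
  rw [← hrpow, show σ - ν = -(ν - σ) by ring, div_neg]
  ring

/-- Step 2 of Appendix B: for `ε, σ, ν, a, b > 0` with `σ ≠ ν` and neither `σ`
nor `ν` a positive integer,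
`∫_a^∞ ∫_b^∞ e^{−εt₁t₂} t₁^{−1−σ} t₂^{−1−ν} dt₁ dt₂
  = (1/(σ−ν))(a^{−σ+ν} Γ(−ν) ε^ν − b^{σ−ν} Γ(−σ) ε^σ)
    + a^{−σ} b^{−ν} ∑_{k=0}^∞ (−1)^k (abε)^k / (k!(k−σ)(k−ν))`,
the series being absolutely convergent. -/
theorem double_power_integral (ε σ ν a b : ℝ) (hε : 0 < ε) (hσ : 0 < σ) (hν : 0 < ν)
    (ha : 0 < a) (hb : 0 < b) (hσν : σ ≠ ν)
    (hσint : ∀ n : ℕ, σ ≠ (n : ℝ) + 1) (hνint : ∀ n : ℕ, ν ≠ (n : ℝ) + 1) :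
    Summable (fun k : ℕ =>
      |(-1 : ℝ) ^ k * (a * b * ε) ^ k /
        ((k.factorial : ℝ) * ((k : ℝ) - σ) * ((k : ℝ) - ν))|) ∧
    (∫ t₁ in Set.Ioi a, ∫ t₂ in Set.Ioi b,
        Real.exp (-(ε * t₁ * t₂)) * t₁ ^ (-1 - σ) * t₂ ^ (-1 - ν))
      = (1 / (σ - ν)) * (a ^ (-σ + ν) * Real.Gamma (-ν) * ε ^ ν
          - b ^ (σ - ν) * Real.Gamma (-σ) * ε ^ σ)
        + a ^ (-σ) * b ^ (-ν) *
            ∑' k : ℕ, (-1 : ℝ) ^ k * (a * b * ε) ^ k /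
              ((k.factorial : ℝ) * ((k : ℝ) - σ) * ((k : ℝ) - ν)) := by
  refine ⟨(summable_neg_one_pow_mul_pow_div_factorial_mul_sub_mul_sub σ ν _).abs, ?_⟩
  have hσk : ∀ k : ℕ, (k : ℝ) ≠ σ := by rintro (_ | n) <;> simp [hσ.ne, (hσint _).symm]
  have hνk : ∀ k : ℕ, (k : ℝ) ≠ ν := by rintro (_ | n) <;> simp [hν.ne, (hνint _).symm]
  have hA : 0 < a * b * ε := by positivity
  have hsν : σ - ν ≠ 0 := sub_ne_zero.mpr hσν
  rw [integral_integral_exp_neg_mul_mul_rpow_Ioi hε (by linarith) ha hb hσν,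
    upperIncompleteGamma_eq_Gamma_sub (s := -σ) (fun m => by simpa using (hσk m).symm) hA,
    upperIncompleteGamma_eq_Gamma_sub (s := -ν) (fun m => by simpa using (hνk m).symm) hA,
    eq_div_of_mul_eq hsν
      ((mul_comm _ _).trans (lowerGammaSeries_neg_sub_lowerGammaSeries_neg hσk hνk _).symm)]
  have hmonσ : b ^ (σ - ν) * ε ^ σ * (a * b * ε) ^ (-σ) = a ^ (-σ) * b ^ (-ν) := by
    rw [mul_rpow (by positivity) hε.le, mul_rpow ha.le hb.le]
    simp only [rpow_def_of_pos, ha, hb, hε, ← exp_add]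
    ring_nf
  have hmonν : a ^ (ν - σ) * ε ^ ν * (a * b * ε) ^ (-ν) = a ^ (-σ) * b ^ (-ν) := by
    rw [mul_rpow (by positivity) hε.le, mul_rpow ha.le hb.le]
    simp only [rpow_def_of_pos, ha, hb, hε, ← exp_add]
    ring_nf
  rw [neg_add_eq_sub]
  field_simp
  linear_combination
    lowerGammaSeries (-σ) (a * b * ε) * hmonσ - lowerGammaSeries (-ν) (a * b * ε) * hmonν
end

section
/- Let 0 < γ < 1, σ > 2, a, b > 0, and let F : [b,∞) → ℂ be measurable, locally integrable, and satisfy F(t) = O(t^{−σ}) as t → +∞ (i.e. |F(t)| ≤ C t^{−σ} for some constant C and all sufficiently large t). Then, as ε → 0+, ∫_{a}^{∞}∫_{b}^{∞} e^{−ε t₁ t₂} F(t₂) t₁^{−1−γ} dt₁ dt₂ = (a^{−γ}/γ) ∫_{b}^{∞} F(t) dt + Γ(−γ) ( ∫_{b}^{∞} F(t) t^{γ} dt ) ε^{γ} + O(ε). -/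
/-!
Exchanging the order of integration turns the double integral into
`∫_b^∞ F(t) g(εt) dt` with `g(x) = ∫_a^∞ e^{-xt} t^{-1-γ} dt = laplaceTail (-1 - γ) a x`.
Integration by parts gives
`∫_0^∞ (e^{-xt} - 1) t^{-1-γ} dt = Γ(-γ) x^γ`, so `g(x) - a^{-γ}/γ - Γ(-γ) x^γ` is minus the
same integral over `(0, a]`, which `|e^{-xt} - 1| ≤ xt` bounds by `x a^{1-γ}/(1-γ)`.
Integrated against `F`, this error is `O(ε)` because `∫_b^∞ |F(t)| t dt < ∞`, which is where
`σ > 2` enters.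
-/

open Set MeasureTheory Filter Topology Real

section ExpSubOne

variable {x t : ℝ}

lemma abs_exp_neg_sub_one_le_self {u : ℝ} (hu : 0 ≤ u) : |exp (-u) - 1| ≤ u := by
  rw [abs_sub_comm, abs_of_nonneg (by simpa using exp_le_one_iff.2 (neg_nonpos.2 hu))]
  linarith [add_one_le_exp (-u)]

lemma abs_exp_neg_sub_one_le_one {u : ℝ} (hu : 0 ≤ u) : |exp (-u) - 1| ≤ 1 := by
  rw [abs_sub_comm, abs_of_nonneg (by simpa using exp_le_one_iff.2 (neg_nonpos.2 hu))]
  linarith [exp_pos (-u)]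

lemma norm_exp_neg_mul_sub_one_mul_rpow_le_mul (s : ℝ) (hx : 0 ≤ x) (ht : 0 < t) :
    ‖(exp (-(x * t)) - 1) * t ^ s‖ ≤ x * t ^ (s + 1) := by
  rw [norm_mul, Real.norm_eq_abs, Real.norm_of_nonneg (rpow_nonneg ht.le _), rpow_add_one ht.ne',
    ← mul_assoc, mul_right_comm]
  exact mul_le_mul_of_nonneg_right (abs_exp_neg_sub_one_le_self (by positivity))
    (rpow_nonneg ht.le _)

lemma norm_exp_neg_mul_sub_one_mul_rpow_le (s : ℝ) (hx : 0 ≤ x) (ht : 0 ≤ t) :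
    ‖(exp (-(x * t)) - 1) * t ^ s‖ ≤ t ^ s := by
  rw [norm_mul, Real.norm_eq_abs, Real.norm_of_nonneg (rpow_nonneg ht _)]
  exact mul_le_of_le_one_left (rpow_nonneg ht _) (abs_exp_neg_sub_one_le_one (by positivity))

lemma integrableOn_exp_neg_mul_sub_one_mul_rpow {s : ℝ} (hs₁ : -2 < s) (hs₂ : s < -1)
    (hx : 0 ≤ x) : IntegrableOn (fun t => (exp (-(x * t)) - 1) * t ^ s) (Ioi 0) := by
  have hmeas : AEStronglyMeasurable (fun t => (exp (-(x * t)) - 1) * t ^ s) :=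
    (by fun_prop : Measurable fun t => (exp (-(x * t)) - 1) * t ^ s).aestronglyMeasurable
  rw [← Ioc_union_Ioi_eq_Ioi zero_le_one, integrableOn_union]
  constructor
  · have hdom : IntegrableOn (fun t => x * t ^ (s + 1)) (Ioc 0 1) :=
      ((intervalIntegrable_iff_integrableOn_Ioc_of_le zero_le_one).1
        (intervalIntegral.intervalIntegrable_rpow' (by linarith))).const_mul x
    refine hdom.mono' hmeas.restrict ?_
    filter_upwards [ae_restrict_mem measurableSet_Ioc] with t ht
    exact norm_exp_neg_mul_sub_one_mul_rpow_le_mul s hx ht.1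
  · refine (integrableOn_Ioi_rpow_of_lt hs₂ zero_lt_one).mono' hmeas.restrict ?_
    filter_upwards [ae_restrict_mem measurableSet_Ioi] with t ht
    exact norm_exp_neg_mul_sub_one_mul_rpow_le s hx (zero_le_one.trans ht.le)

lemma tendsto_exp_neg_mul_sub_one_mul_rpow_nhdsGT_zero {s : ℝ} (hs : -1 < s) (hx : 0 ≤ x) :
    Tendsto (fun t => (exp (-(x * t)) - 1) * t ^ s) (𝓝[>] 0) (𝓝 0) := by
  have hlim : Tendsto (fun t : ℝ => x * t ^ (s + 1)) (𝓝[>] 0) (𝓝 0) := by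
    have := ((continuous_rpow_const (by linarith : 0 ≤ s + 1)).tendsto 0).const_mul x
    rw [zero_rpow (by linarith), mul_zero] at this
    exact this.mono_left nhdsWithin_le_nhds
  refine squeeze_zero_norm' ?_ hlim
  filter_upwards [self_mem_nhdsWithin] with t ht
  exact norm_exp_neg_mul_sub_one_mul_rpow_le_mul s hx ht

lemma tendsto_exp_neg_mul_sub_one_mul_rpow_atTop {s : ℝ} (hs : s < 0) (hx : 0 ≤ x) :
    Tendsto (fun t => (exp (-(x * t)) - 1) * t ^ s) atTop (𝓝 0) := by
  have hlim : Tendsto (fun t : ℝ => t ^ s) atTop (𝓝 0) := by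
    simpa using tendsto_rpow_neg_atTop (neg_pos.2 hs)
  refine squeeze_zero_norm' ?_ hlim
  filter_upwards [eventually_ge_atTop 0] with t ht
  exact norm_exp_neg_mul_sub_one_mul_rpow_le s hx ht

end ExpSubOne

theorem integral_exp_neg_mul_sub_one_mul_rpow {γ x : ℝ} (hγ₀ : 0 < γ) (hγ₁ : γ < 1)
    (hx : 0 < x) :
    ∫ t in Ioi (0 : ℝ), (exp (-(x * t)) - 1) * t ^ (-1 - γ) = Gamma (-γ) * x ^ γ := by
  -- Integrate by parts against `v = -t^{-γ}/γ`: `u'v` is a `Γ(1 - γ)` integrand.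
  have hu : ∀ t ∈ Ioi (0 : ℝ),
      HasDerivAt (fun t => exp (-(x * t)) - 1) (-x * exp (-(x * t))) t := fun t _ => by
    simpa [mul_comm] using (((hasDerivAt_id t).const_mul x).neg.exp.sub_const 1)
  have hv : ∀ t ∈ Ioi (0 : ℝ), HasDerivAt (fun t => -(t ^ (-γ) / γ)) (t ^ (-1 - γ)) t :=
    fun t ht => by
      refine ((hasDerivAt_rpow_const (p := -γ) (Or.inl (ne_of_gt ht))).div_const γ).neg
        |>.congr_deriv ?_
      rw [show -γ - 1 = -1 - γ by ring]
      field_simp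
  have hGamma : ∫ t in Ioi (0 : ℝ), t ^ ((1 - γ) - 1) * exp (-(x * t))
      = (1 / x) ^ (1 - γ) * Gamma (1 - γ) :=
    integral_rpow_mul_exp_neg_mul_Ioi (by linarith) hx
  have hGammaInt : IntegrableOn (fun t => t ^ ((1 - γ) - 1) * exp (-(x * t))) (Ioi 0) :=
    .of_integral_ne_zero <| by
      rw [hGamma]
      have := Gamma_pos_of_pos (by linarith : 0 < 1 - γ)
      positivity
  have hu'v : (fun t => -x * exp (-(x * t)) * -(t ^ (-γ) / γ))
      = fun t => x / γ * (t ^ ((1 - γ) - 1) * exp (-(x * t))) := by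
    funext t
    rw [show (1 - γ) - 1 = -γ by ring]
    ring
  have huv : ((fun t => exp (-(x * t)) - 1) * fun t => -(t ^ (-γ) / γ))
      = fun t => -γ⁻¹ * ((exp (-(x * t)) - 1) * t ^ (-γ)) := by
    funext t
    simp only [Pi.mul_apply]
    ring
  have h0 := (tendsto_exp_neg_mul_sub_one_mul_rpow_nhdsGT_zero (s := -γ) (by linarith)
    hx.le).const_mul (-γ⁻¹)
  have htop := (tendsto_exp_neg_mul_sub_one_mul_rpow_atTop (s := -γ) (by linarith)
    hx.le).const_mul (-γ⁻¹)
  rw [mul_zero, ← huv] at h0 htop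
  rw [integral_Ioi_mul_deriv_eq_deriv_mul hu hv
    (integrableOn_exp_neg_mul_sub_one_mul_rpow (by linarith) (by linarith) hx.le)
    (by rw [Pi.mul_def, hu'v]; exact hGammaInt.const_mul _) h0 htop, hu'v, integral_const_mul,
    hGamma]
  have hG : Gamma (1 - γ) = -γ * Gamma (-γ) := by
    simpa [show -γ + 1 = 1 - γ by ring] using Gamma_add_one (s := -γ) (by linarith)
  rw [hG, one_div, inv_rpow hx.le, rpow_sub hx, rpow_one]
  field_simp
  ring

noncomputable def laplaceTail (s a x : ℝ) : ℝ := ∫ t in Ioi a, exp (-(x * t)) * t ^ s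

theorem abs_laplaceTail_sub_le {γ a x : ℝ} (hγ₀ : 0 < γ) (hγ₁ : γ < 1) (ha : 0 < a)
    (hx : 0 < x) :
    |laplaceTail (-1 - γ) a x - (a ^ (-γ) / γ + Gamma (-γ) * x ^ γ)|
      ≤ a ^ (1 - γ) / (1 - γ) * x := by
  set f := fun t => (exp (-(x * t)) - 1) * t ^ (-1 - γ)
  have hf : IntegrableOn f (Ioi 0) :=
    integrableOn_exp_neg_mul_sub_one_mul_rpow (by linarith) (by linarith) hx.le
  have htail : laplaceTail (-1 - γ) a x = (∫ t in Ioi a, f t) + a ^ (-γ) / γ := by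
    rw [show a ^ (-γ) / γ = ∫ t in Ioi a, t ^ (-1 - γ) by
        rw [integral_Ioi_rpow_of_lt (by linarith) ha, show -1 - γ + 1 = -γ by ring]
        field_simp,
      ← integral_add (hf.mono_set (Ioi_subset_Ioi ha.le))
        (integrableOn_Ioi_rpow_of_lt (by linarith) ha)]
    exact setIntegral_congr_fun measurableSet_Ioi fun t _ => by ring
  have hsplit : (∫ t in Ioc 0 a, f t) + ∫ t in Ioi a, f t = Gamma (-γ) * x ^ γ := by
    rw [← setIntegral_union (Ioc_disjoint_Ioi le_rfl) measurableSet_Ioi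
      (hf.mono_set Ioc_subset_Ioi_self) (hf.mono_set (Ioi_subset_Ioi ha.le)),
      Ioc_union_Ioi_eq_Ioi ha.le]
    exact integral_exp_neg_mul_sub_one_mul_rpow hγ₀ hγ₁ hx
  have hhead : ‖∫ t in Ioc 0 a, f t‖ ≤ ∫ t in Ioc 0 a, x * t ^ (-1 - γ + 1) := by
    refine norm_integral_le_of_norm_le ?_ ?_
    · exact ((intervalIntegrable_iff_integrableOn_Ioc_of_le ha.le).1
        (intervalIntegral.intervalIntegrable_rpow' (by linarith))).const_mul x
    · filter_upwards [ae_restrict_mem measurableSet_Ioc] with t ht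
      exact norm_exp_neg_mul_sub_one_mul_rpow_le_mul _ hx.le ht.1
  have hbound : ∫ t in Ioc 0 a, x * t ^ (-1 - γ + 1) = a ^ (1 - γ) / (1 - γ) * x := by
    rw [integral_const_mul, ← intervalIntegral.integral_of_le ha.le,
      integral_rpow (Or.inl (by linarith)), show -1 - γ + 1 + 1 = 1 - γ by ring,
      zero_rpow (by linarith)]
    ring
  rw [htail, ← Real.norm_eq_abs]
  calc ‖(∫ t in Ioi a, f t) + a ^ (-γ) / γ - (a ^ (-γ) / γ + Gamma (-γ) * x ^ γ)‖
      = ‖∫ t in Ioc 0 a, f t‖ := by rw [← hsplit, ← norm_neg]; ring_nf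
    _ ≤ a ^ (1 - γ) / (1 - γ) * x := hbound ▸ hhead

section WeightedIntegrals

variable {F : ℝ → ℂ} {a b s ε : ℝ}

lemma integrableOn_Ioi_mul_rpow_of_norm_le {σ p C t₀ : ℝ} (hb : 0 < b)
    (hp : p - σ < -1) (hFloc : LocallyIntegrableOn F (Ici b))
    (hF : ∀ t, t₀ ≤ t → ‖F t‖ ≤ C * t ^ (-σ)) :
    IntegrableOn (fun t : ℝ => F t * ((t ^ p : ℝ) : ℂ)) (Ioi b) := by
  have hcont : ContinuousOn (fun t : ℝ => ((t ^ p : ℝ) : ℂ)) (Ici b) := fun t ht =>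
    (Complex.continuous_ofReal.continuousAt.comp
      (continuousAt_rpow_const _ _ (Or.inl (hb.trans_le ht).ne'))).continuousWithinAt
  have hO : (fun t : ℝ => F t * ((t ^ p : ℝ) : ℂ)) =O[atTop] fun t => t ^ (p - σ) := by
    refine Asymptotics.IsBigO.of_bound C ?_
    filter_upwards [eventually_ge_atTop t₀, eventually_gt_atTop 0] with t ht₀ ht
    rw [norm_mul, Complex.norm_real, Real.norm_of_nonneg (rpow_nonneg ht.le _),
      Real.norm_of_nonneg (rpow_nonneg ht.le _), sub_eq_neg_add, rpow_add ht, ← mul_assoc]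
    exact mul_le_mul_of_nonneg_right (hF t ht₀) (rpow_nonneg ht.le _)
  exact ((hFloc.mul_continuousOn hcont isClosed_Ici.isLocallyClosed).integrableOn_of_isBigO_atTop
    hO (integrableAtFilter_rpow_atTop_iff.2 hp)).mono_set Ioi_subset_Ici_self

lemma integrable_prod_exp_mul_rpow (hs : s < -1) (ha : 0 < a) (hb : 0 ≤ b) (hε : 0 ≤ ε)
    (hF : IntegrableOn F (Ioi b)) :
    Integrable (Function.uncurry fun t₁ t₂ : ℝ =>
        ((exp (-(ε * t₁ * t₂)) : ℝ) : ℂ) * F t₂ * ((t₁ ^ s : ℝ) : ℂ))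
      ((volume.restrict (Ioi a)).prod (volume.restrict (Ioi b))) := by
  have hF₂ : AEStronglyMeasurable (fun z : ℝ × ℝ => F z.2)
      ((volume.restrict (Ioi a)).prod (volume.restrict (Ioi b))) :=
    hF.aestronglyMeasurable.comp_snd
  have hmeas : AEStronglyMeasurable (fun z : ℝ × ℝ =>
        ((exp (-(ε * z.1 * z.2)) : ℝ) : ℂ) * F z.2 * ((z.1 ^ s : ℝ) : ℂ))
      ((volume.restrict (Ioi a)).prod (volume.restrict (Ioi b))) :=
    ((Measurable.aestronglyMeasurable (by fun_prop)).mul hF₂).mul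
      (Measurable.aestronglyMeasurable (by fun_prop))
  refine ((integrableOn_Ioi_rpow_of_lt hs ha).mul_prod hF.norm).mono' hmeas ?_
  rw [Measure.prod_restrict]
  filter_upwards [ae_restrict_mem (measurableSet_Ioi.prod measurableSet_Ioi)] with z hz
  have hz₁ : 0 < z.1 := ha.trans hz.1
  have hexp : exp (-(ε * z.1 * z.2)) ≤ 1 :=
    exp_le_one_iff.2 (neg_nonpos.2 (by have := hb.trans hz.2.le; positivity))
  show ‖_ * F z.2 * _‖ ≤ z.1 ^ s * ‖F z.2‖
  simp only [norm_mul, Complex.norm_real,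
    Real.norm_of_nonneg (exp_pos _).le, Real.norm_of_nonneg (rpow_nonneg hz₁.le _)]
  calc _ ≤ 1 * ‖F z.2‖ * z.1 ^ s := by gcongr
    _ = _ := by ring

lemma integral_Ioi_exp_mul_mul_rpow (F : ℝ → ℂ) (a s ε t₂ : ℝ) :
    ∫ t₁ in Ioi a, ((exp (-(ε * t₁ * t₂)) : ℝ) : ℂ) * F t₂ * ((t₁ ^ s : ℝ) : ℂ)
      = F t₂ * (laplaceTail s a (ε * t₂) : ℂ) := by
  rw [laplaceTail, ← integral_complex_ofReal, ← integral_const_mul]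
  congr 1 with t₁
  rw [mul_right_comm ε t₁ t₂]
  push_cast
  ring

lemma integrableOn_mul_laplaceTail (hs : s < -1) (ha : 0 < a) (hb : 0 ≤ b) (hε : 0 ≤ ε)
    (hF : IntegrableOn F (Ioi b)) :
    IntegrableOn (fun t => F t * (laplaceTail s a (ε * t) : ℂ)) (Ioi b) := by
  simpa only [IntegrableOn, Function.uncurry, integral_Ioi_exp_mul_mul_rpow] using
    (integrable_prod_exp_mul_rpow hs ha hb hε hF).integral_prod_right

lemma integral_Ioi_integral_Ioi_exp_mul_mul_rpow (hs : s < -1) (ha : 0 < a) (hb : 0 ≤ b)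
    (hε : 0 ≤ ε) (hF : IntegrableOn F (Ioi b)) :
    ∫ t₁ in Ioi a, ∫ t₂ in Ioi b, ((exp (-(ε * t₁ * t₂)) : ℝ) : ℂ) * F t₂ * ((t₁ ^ s : ℝ) : ℂ)
      = ∫ t in Ioi b, F t * (laplaceTail s a (ε * t) : ℂ) := by
  rw [integral_integral_swap (integrable_prod_exp_mul_rpow hs ha hb hε hF)]
  simp only [integral_Ioi_exp_mul_mul_rpow]

end WeightedIntegrals

section Remainder

variable {F : ℝ → ℂ} {γ a b ε : ℝ}

lemma integral_mul_laplaceTail_sub (hb : 0 < b) (hε : 0 < ε) (hF₀ : IntegrableOn F (Ioi b))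
    (hFγ : IntegrableOn (fun t => F t * ((t ^ γ : ℝ) : ℂ)) (Ioi b))
    (hFg : IntegrableOn (fun t => F t * (laplaceTail (-1 - γ) a (ε * t) : ℂ)) (Ioi b)) :
    (∫ t in Ioi b, F t * (laplaceTail (-1 - γ) a (ε * t) : ℂ))
        - ((a ^ (-γ) / γ : ℝ) : ℂ) * (∫ t in Ioi b, F t)
        - ((Gamma (-γ) : ℝ) : ℂ) * (∫ t in Ioi b, F t * ((t ^ γ : ℝ) : ℂ)) * ((ε ^ γ : ℝ) : ℂ)
      = ∫ t in Ioi b, F t * ((laplaceTail (-1 - γ) a (ε * t)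
          - (a ^ (-γ) / γ + Gamma (-γ) * (ε * t) ^ γ) : ℝ) : ℂ) := by
  rw [← integral_const_mul, ← integral_const_mul, ← integral_mul_const,
    ← integral_sub hFg (hF₀.const_mul _), ← integral_sub]
  · refine setIntegral_congr_fun measurableSet_Ioi fun t ht => ?_
    rw [mul_rpow hε.le (hb.trans ht).le]
    push_cast
    ring
  · exact hFg.sub (hF₀.const_mul _)
  · exact (hFγ.const_mul _).mul_const _

lemma norm_integral_mul_laplaceTail_sub_le (hγ₀ : 0 < γ) (hγ₁ : γ < 1) (ha : 0 < a)
    (hb : 0 < b) (hε : 0 < ε) (hF₁ : IntegrableOn (fun t => ‖F t‖ * t) (Ioi b)) :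
    ‖∫ t in Ioi b, F t * ((laplaceTail (-1 - γ) a (ε * t)
        - (a ^ (-γ) / γ + Gamma (-γ) * (ε * t) ^ γ) : ℝ) : ℂ)‖
      ≤ a ^ (1 - γ) / (1 - γ) * (∫ t in Ioi b, ‖F t‖ * t) * ε := by
  calc _ ≤ ∫ t in Ioi b, a ^ (1 - γ) / (1 - γ) * ε * (‖F t‖ * t) := by
        refine norm_integral_le_of_norm_le (hF₁.const_mul _) ?_
        filter_upwards [ae_restrict_mem measurableSet_Ioi] with t ht
        rw [norm_mul, Complex.norm_real, Real.norm_eq_abs]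
        calc _ ≤ ‖F t‖ * (a ^ (1 - γ) / (1 - γ) * (ε * t)) := by
              gcongr
              have := hb.trans ht
              exact abs_laplaceTail_sub_le hγ₀ hγ₁ ha (by positivity)
          _ = _ := by ring
    _ = _ := by rw [integral_const_mul]; ring

end Remainder

theorem asympt_power_weight_general (γ σ a b : ℝ) (hγ0 : 0 < γ) (hγ1 : γ < 1) (hσ : 2 < σ)
    (ha : 0 < a) (hb : 0 < b) (F : ℝ → ℂ)
    (hFloc : MeasureTheory.LocallyIntegrableOn F (Set.Ici b))
    (C₁ t₀ : ℝ) (hF : ∀ t : ℝ, t₀ ≤ t → ‖F t‖ ≤ C₁ * t ^ (-σ)) :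
    ∃ C ε₀ : ℝ, 0 < ε₀ ∧ ∀ ε : ℝ, 0 < ε → ε ≤ ε₀ →
      ‖(∫ t₁ in Set.Ioi a, ∫ t₂ in Set.Ioi b,
            (Real.exp (-(ε * t₁ * t₂)) : ℂ) * F t₂ * ((t₁ ^ (-1 - γ) : ℝ) : ℂ))
          - ((a ^ (-γ) / γ : ℝ) : ℂ) * (∫ t in Set.Ioi b, F t)
          - ((Real.Gamma (-γ) : ℝ) : ℂ) *
              (∫ t in Set.Ioi b, F t * ((t ^ γ : ℝ) : ℂ)) * ((ε ^ γ : ℝ) : ℂ)‖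
        ≤ C * ε := by
  have hF₀ : IntegrableOn F (Ioi b) := by
    simpa using integrableOn_Ioi_mul_rpow_of_norm_le (p := 0) hb (by linarith) hFloc hF
  have hFγ := integrableOn_Ioi_mul_rpow_of_norm_le (p := γ) hb (by linarith) hFloc hF
  have hF₁ : IntegrableOn (fun t => ‖F t‖ * t) (Ioi b) := by
    refine IntegrableOn.congr_fun
      (integrableOn_Ioi_mul_rpow_of_norm_le (p := 1) hb (by linarith) hFloc hF).norm
      (fun t ht => ?_) measurableSet_Ioi
    simp [abs_of_pos (hb.trans ht)]
  refine ⟨a ^ (1 - γ) / (1 - γ) * ∫ t in Ioi b, ‖F t‖ * t, 1, one_pos, fun ε hε _ => ?_⟩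
  have hs : -1 - γ < -1 := by linarith
  rw [integral_Ioi_integral_Ioi_exp_mul_mul_rpow hs ha hb.le hε.le hF₀,
    integral_mul_laplaceTail_sub hb hε hF₀ hFγ
      (integrableOn_mul_laplaceTail hs ha hb.le hε.le hF₀)]
  exact norm_integral_mul_laplaceTail_sub_le hγ0 hγ1 ha hb hε hF₁

/-- Step 4 of Appendix B: for `0 < γ < 1`, `σ > 2`, `a, b > 0` and `F`
measurable, locally integrable with `F(t) = O(t^{−σ})` as `t → +∞`, as `ε → 0+`,
`∫_a^∞∫_b^∞ e^{−εt₁t₂} F(t₂) t₁^{−1−γ} dt₁ dt₂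
  = (a^{−γ}/γ) ∫_b^∞ F + Γ(−γ)(∫_b^∞ F(t) t^γ dt) ε^γ + O(ε)`. -/
theorem asympt_power_weight (γ σ a b : ℝ) (hγ0 : 0 < γ) (hγ1 : γ < 1) (hσ : 2 < σ)
    (ha : 0 < a) (hb : 0 < b) (F : ℝ → ℂ) (hFmeas : Measurable F)
    (hFloc : MeasureTheory.LocallyIntegrableOn F (Set.Ici b))
    (C₁ t₀ : ℝ) (hF : ∀ t : ℝ, t₀ ≤ t → ‖F t‖ ≤ C₁ * t ^ (-σ)) :
    ∃ C ε₀ : ℝ, 0 < ε₀ ∧ ∀ ε : ℝ, 0 < ε → ε ≤ ε₀ →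
      ‖(∫ t₁ in Set.Ioi a, ∫ t₂ in Set.Ioi b,
            (Real.exp (-(ε * t₁ * t₂)) : ℂ) * F t₂ * ((t₁ ^ (-1 - γ) : ℝ) : ℂ))
          - ((a ^ (-γ) / γ : ℝ) : ℂ) * (∫ t in Set.Ioi b, F t)
          - ((Real.Gamma (-γ) : ℝ) : ℂ) *
              (∫ t in Set.Ioi b, F t * ((t ^ γ : ℝ) : ℂ)) * ((ε ^ γ : ℝ) : ℂ)‖
        ≤ C * ε :=
  asympt_power_weight_general γ σ a b hγ0 hγ1 hσ ha hb F hFloc C₁ t₀ hF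
end

section
/- Let X, Z > 0, c > −1 and d ∈ ℝ. Then ∫₀^{1} (Xt + Z)^{d} t^{c} dt = ((X+Z)^{d}/(1+c)) · ₂F₁(1, −d; c+2; X/(X+Z)). -/
/-!
Substituting `t = 1 - s` and factoring out `X + Z` turns the integral into
`(X + Z)^d ∫₀¹ (1 - x s)^d (1 - s)^c ds` with `x = X/(X+Z) ∈ (0,1)`. Expanding `(1 - x s)^d` in its
binomial series, which converges absolutely and uniformly for `s ∈ [0,1]`, and integrating term by
term with the Beta integral `∫₀¹ s^k (1-s)^c ds = k!/((c+1)⋯(c+k+1))` produces exactly the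
coefficients of `₂F₁(1, -d; c+2; x)/(1+c)`: this is Euler's integral representation of `₂F₁`.
-/

/-- The Pochhammer symbol `(q)_k = q(q+1)⋯(q+k−1)`. -/
noncomputable def rpoch (q : ℝ) (k : ℕ) : ℝ := ∏ i ∈ Finset.range k, (q + i)

/-- The Gauss hypergeometric series `₂F₁(a,b;c;x) = ∑_k (a)_k (b)_k / ((c)_k k!) x^k`. -/
noncomputable def hyp2F1 (a b c x : ℝ) : ℝ :=
  ∑' k : ℕ, rpoch a k * rpoch b k / (rpoch c k * (k.factorial : ℝ)) * x ^ k

open Polynomial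

theorem rpoch_eq_eval_ascPochhammer (q : ℝ) (k : ℕ) : rpoch q k = (ascPochhammer ℝ k).eval q := by
  induction k with
  | zero => simp [rpoch]
  | succ k ih => rw [rpoch, Finset.prod_range_succ, ← rpoch, ih, ascPochhammer_succ_eval]

theorem rpoch_one (k : ℕ) : rpoch 1 k = k.factorial := by
  rw [rpoch_eq_eval_ascPochhammer, ascPochhammer_eval_one]

theorem rpoch_succ' (q : ℝ) (k : ℕ) : rpoch q (k + 1) = q * rpoch (q + 1) k := by
  simp only [rpoch_eq_eval_ascPochhammer, ascPochhammer_succ_left, eval_mul, eval_X, eval_comp,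
    eval_add, eval_one]

theorem rpoch_pos {q : ℝ} (hq : 0 < q) (k : ℕ) : 0 < rpoch q k :=
  Finset.prod_pos fun _ _ => by positivity

theorem rpoch_neg_eq_factorial_mul_choose (d : ℝ) (k : ℕ) :
    rpoch (-d) k = (-1) ^ k * (k.factorial * Ring.choose d k) := by
  rw [Ring.choose_eq_smul, smul_eq_mul, mul_inv_cancel_left₀ (by positivity),
    rpoch_eq_eval_ascPochhammer, ← ascPochhammer_smeval_eq_eval,
    ascPochhammer_smeval_neg_eq_descPochhammer]
  simp only [Int.negOnePow_def, zpow_natCast, Units.smul_def, Units.val_pow_eq_pow_val,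
    Units.val_neg, Units.val_one, zsmul_eq_mul, Int.cast_pow, Int.cast_neg, Int.cast_one]

theorem hasSum_rpoch_neg_div_factorial_mul_pow (d : ℝ) {y : ℝ} (hy : |y| < 1) :
    HasSum (fun k => rpoch (-d) k / k.factorial * y ^ k) ((1 - y) ^ d) := by
  have hbinom := (Real.one_add_rpow_hasFPowerSeriesOnBall_zero (a := d)).hasSum (y := -y)
    (by simpa [enorm_eq_nnnorm, ← NNReal.coe_lt_coe] using hy)
  rw [binomialSeries, FormalMultilinearSeries.ofScalars_apply_eq', zero_add,
    ← sub_eq_add_neg] at hbinom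
  refine hbinom.congr_fun fun k => ?_
  rw [rpoch_neg_eq_factorial_mul_choose, neg_pow y, smul_eq_mul]
  field_simp

theorem integral_pow_mul_one_sub_rpow {c : ℝ} (hc : -1 < c) (k : ℕ) :
    ∫ t in (0:ℝ)..1, t ^ k * (1 - t) ^ c = k.factorial / rpoch (c + 1) (k + 1) := by
  have hbeta := Complex.betaIntegral_eval_nat_add_one_right
    (u := (c + 1 : ℝ)) (by simp; linarith) k
  rw [← Complex.betaIntegral_symm, Complex.betaIntegral] at hbeta
  apply Complex.ofReal_injective
  rw [← intervalIntegral.integral_ofReal]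
  convert hbeta using 1
  · refine intervalIntegral.integral_congr fun t ht => ?_
    rw [Set.uIcc_of_le zero_le_one] at ht
    push_cast
    rw [add_sub_cancel_right, add_sub_cancel_right, Complex.cpow_natCast,
      Complex.ofReal_cpow (by linarith [ht.2]), Complex.ofReal_sub, Complex.ofReal_one]
  · simp [rpoch]

theorem integral_one_sub_mul_rpow_mul_one_sub_rpow_eq_hyp2F1 {x : ℝ} (hx : |x| < 1) {c : ℝ}
    (hc : -1 < c) (d : ℝ) :
    ∫ s in (0:ℝ)..1, (1 - x * s) ^ d * (1 - s) ^ c = hyp2F1 1 (-d) (c + 2) x / (1 + c) := by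
  set a : ℕ → ℝ := fun k => rpoch (-d) k / k.factorial * x ^ k
  -- a summable real series is absolutely summable; `|a k| (1 - s)^c` dominates the `k`-th term
  have habs : Summable fun k => |a k| := (hasSum_rpoch_neg_div_factorial_mul_pow d hx).summable.abs
  have htermwise : HasSum (fun k => ∫ s in (0:ℝ)..1, a k * (s ^ k * (1 - s) ^ c))
      (∫ s in (0:ℝ)..1, (1 - x * s) ^ d * (1 - s) ^ c) := by
    refine intervalIntegral.hasSum_integral_of_dominated_convergence
      (fun k s => |a k| * (1 - s) ^ c) (fun k => by fun_prop) (fun k => ?_)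
      (.of_forall fun s _ => habs.mul_right _) ?_ (.of_forall fun s hs => ?_)
    · filter_upwards with s hs
      rw [Set.uIoc_of_le zero_le_one] at hs
      have hpow : 0 ≤ (1 - s) ^ c := Real.rpow_nonneg (by linarith [hs.2]) c
      rw [norm_mul, Real.norm_eq_abs, Real.norm_of_nonneg (mul_nonneg (pow_nonneg hs.1.le k) hpow)]
      gcongr
      exact mul_le_of_le_one_left hpow (pow_le_one₀ hs.1.le hs.2)
    · simp_rw [tsum_mul_right]
      refine IntervalIntegrable.const_mul ?_ _
      simpa using
        ((intervalIntegral.intervalIntegrable_rpow' hc (a := 0) (b := 1)).comp_sub_left 1).symm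
    · rw [Set.uIoc_of_le zero_le_one] at hs
      have hxs : |x * s| < 1 := by
        rw [abs_mul, abs_of_pos hs.1]
        nlinarith [abs_nonneg x, hs.1, hs.2]
      refine ((hasSum_rpoch_neg_div_factorial_mul_pow d hxs).mul_right _).congr_fun fun k => ?_
      simp only [a]
      ring
  rw [hyp2F1, ← tsum_div_const, ← htermwise.tsum_eq]
  refine tsum_congr fun k => ?_
  have hc1 : c + 1 ≠ 0 := by linarith
  have hc1' : 1 + c ≠ 0 := by linarith
  have hc2 : rpoch (c + 2) k ≠ 0 := (rpoch_pos (by linarith) k).ne'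
  rw [intervalIntegral.integral_const_mul, integral_pow_mul_one_sub_rpow hc, rpoch_succ',
    rpoch_one, show c + 1 + 1 = c + 2 by ring]
  simp only [a]
  field_simp
  ring

/-- Step 6 of Appendix B: for `X, Z > 0`, `c > −1` and `d ∈ ℝ`,
`∫₀^1 (Xt+Z)^d t^c dt = ((X+Z)^d/(1+c)) ₂F₁(1,−d;c+2;X/(X+Z))`. -/
theorem integral_power_hyp2F1 (X Z : ℝ) (hX : 0 < X) (hZ : 0 < Z) (c : ℝ) (hc : -1 < c)
    (d : ℝ) :
    (∫ t in (0:ℝ)..1, (X * t + Z) ^ d * t ^ c)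
      = ((X + Z) ^ d / (1 + c)) * hyp2F1 1 (-d) (c + 2) (X / (X + Z)) := by
  have hXZ : 0 < X + Z := by linarith
  set x := X / (X + Z)
  have hx0 : 0 < x := div_pos hX hXZ
  have hx1 : x < 1 := (div_lt_one hXZ).2 (by linarith)
  have hx : |x| < 1 := abs_lt.2 ⟨by linarith, hx1⟩
  have hfactor : ∀ s ∈ Set.uIcc (0:ℝ) 1,
      (X * (1 - s) + Z) ^ d * (1 - s) ^ c = (X + Z) ^ d * ((1 - x * s) ^ d * (1 - s) ^ c) := by
    intro s hs
    rw [Set.uIcc_of_le zero_le_one] at hs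
    have hlin : X * (1 - s) + Z = (X + Z) * (1 - x * s) := by simp only [x]; field_simp; ring
    rw [hlin, Real.mul_rpow hXZ.le (by nlinarith [hs.2]), mul_assoc]
  calc (∫ t in (0:ℝ)..1, (X * t + Z) ^ d * t ^ c)
      = ∫ s in (0:ℝ)..1, (X * (1 - s) + Z) ^ d * (1 - s) ^ c := by
        simpa using (intervalIntegral.integral_comp_sub_left
          (fun t => (X * t + Z) ^ d * t ^ c) (1:ℝ) (a := 0) (b := 1)).symm
    _ = (X + Z) ^ d * ∫ s in (0:ℝ)..1, (1 - x * s) ^ d * (1 - s) ^ c := by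
        rw [intervalIntegral.integral_congr hfactor, intervalIntegral.integral_const_mul]
    _ = _ := by
        rw [integral_one_sub_mul_rpow_mul_one_sub_rpow_eq_hyp2F1 hx hc]
        ring
end
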